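/- arXiv:1402.3205 — 11 statements merged into one kernel-verified Lean document; each statement's English description precedes it below -/
import Mathlib

section
/- Let S be a semigroup and u, v idempotents of S. The following are equivalent: (a) uS ≅ vS as right S-ideals; (b) Su ≅ Sv as left S-ideals; (c) there exist a ∈ uSv and b ∈ vSu with ab = u and ba = v; (d) there exist a, b ∈ S with ab = u and ba = v. -/
/-- The right ideal `uS = {u * s : s ∈ S}` of a semigroup. -/
def rS {S : Type*} [Semigroup S] (u : S) : Set S := {x | ∃ s, x = u * s}

/-- The left ideal `Su = {s * u : s ∈ S}` of a semigroup. -/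
def lS {S : Type*} [Semigroup S] (u : S) : Set S := {x | ∃ s, x = s * u}

theorem rS_mul {S : Type*} [Semigroup S] {u x : S} (hx : x ∈ rS u) (y : S) :
    x * y ∈ rS u := by
  obtain ⟨s, rfl⟩ := hx
  exact ⟨s * y, mul_assoc u s y⟩

theorem lS_mul {S : Type*} [Semigroup S] {u x : S} (hx : x ∈ lS u) (y : S) :
    y * x ∈ lS u := by
  obtain ⟨s, rfl⟩ := hx
  exact ⟨y * s, (mul_assoc y s u).symm⟩

/-- An isomorphism `uS ≅ vS` of right `S`-ideals. -/
structure RightIdealIso (S : Type*) [Semigroup S] (u v : S) where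
  toEquiv : rS u ≃ rS v
  map_mul_right : ∀ (x : rS u) (y : S),
    (toEquiv ⟨x.1 * y, rS_mul x.2 y⟩ : S) = (toEquiv x : S) * y

/-- An isomorphism `Su ≅ Sv` of left `S`-ideals. -/
structure LeftIdealIso (S : Type*) [Semigroup S] (u v : S) where
  toEquiv : lS u ≃ lS v
  map_mul_left : ∀ (x : lS u) (y : S),
    (toEquiv ⟨y * x.1, lS_mul x.2 y⟩ : S) = y * (toEquiv x : S)

/-- for idempotents `u, v` of a semigroup `S` the following are
equivalent: (a) `uS ≅ vS` as right ideals; (b) `Su ≅ Sv` as left ideals;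
(c) there are `a ∈ uSv`, `b ∈ vSu` with `ab = u`, `ba = v`;
(d) there are `a, b ∈ S` with `ab = u`, `ba = v`. -/
theorem stmt2 {S : Type*} [Semigroup S] (u v : S) (hu : u * u = u) (hv : v * v = v) :
    List.TFAE [Nonempty (RightIdealIso S u v),
      Nonempty (LeftIdealIso S u v),
      ∃ a b : S, (∃ s, a = u * s * v) ∧ (∃ s, b = v * s * u) ∧ a * b = u ∧ b * a = v,
      ∃ a b : S, a * b = u ∧ b * a = v] := by
  have humem : u ∈ rS u := ⟨u, hu.symm⟩
  have hvmem : v ∈ rS v := ⟨v, hv.symm⟩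
  have humem' : u ∈ lS u := ⟨u, hu.symm⟩
  have hvmem' : v ∈ lS v := ⟨v, hv.symm⟩
  tfae_have 1 → 4 := by
    rintro ⟨β⟩
    set b : S := (β.toEquiv ⟨u, humem⟩ : S) with hb
    set a : S := (β.toEquiv.symm ⟨v, hvmem⟩ : S) with ha
    obtain ⟨s, hs⟩ := (β.toEquiv.symm ⟨v, hvmem⟩).2
    obtain ⟨t, ht⟩ := (β.toEquiv ⟨u, humem⟩).2
    have hua : u * a = a := by rw [ha, hs, ← mul_assoc, hu]
    have hvb : v * b = b := by rw [hb, ht, ← mul_assoc, hv]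
    have hβa : (β.toEquiv (β.toEquiv.symm ⟨v, hvmem⟩) : S) = v := by
      rw [Equiv.apply_symm_apply]
    refine ⟨a, b, ?_, ?_⟩
    · have h1 := β.map_mul_right (β.toEquiv.symm ⟨v, hvmem⟩) b
      rw [hβa] at h1
      have h2 : (⟨a * b, rS_mul (β.toEquiv.symm ⟨v, hvmem⟩).2 b⟩ : rS u)
          = ⟨u, humem⟩ := by
        apply β.toEquiv.injective
        apply Subtype.ext
        rw [h1, hvb]
      exact congrArg Subtype.val h2
    · have h1 := β.map_mul_right ⟨u, humem⟩ a
      have h2 : (⟨u * a, rS_mul humem a⟩ : rS u) = β.toEquiv.symm ⟨v, hvmem⟩ :=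
        Subtype.ext hua
      rw [h2, hβa] at h1
      exact h1.symm
  tfae_have 2 → 4 := by
    rintro ⟨β⟩
    set a : S := (β.toEquiv ⟨u, humem'⟩ : S) with ha
    set b : S := (β.toEquiv.symm ⟨v, hvmem'⟩ : S) with hb
    obtain ⟨s, hs⟩ := (β.toEquiv.symm ⟨v, hvmem'⟩).2
    obtain ⟨t, ht⟩ := (β.toEquiv ⟨u, humem'⟩).2
    have hbu : b * u = b := by rw [hb, hs, mul_assoc, hu]
    have hav : a * v = a := by rw [ha, ht, mul_assoc, hv]
    have hβb : (β.toEquiv (β.toEquiv.symm ⟨v, hvmem'⟩) : S) = v := by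
      rw [Equiv.apply_symm_apply]
    refine ⟨a, b, ?_, ?_⟩
    · have h1 := β.map_mul_left (β.toEquiv.symm ⟨v, hvmem'⟩) a
      rw [hβb] at h1
      have h2 : (⟨a * b, lS_mul (β.toEquiv.symm ⟨v, hvmem'⟩).2 a⟩ : lS u)
          = ⟨u, humem'⟩ := by
        apply β.toEquiv.injective
        apply Subtype.ext
        rw [h1, hav]
      exact congrArg Subtype.val h2
    · have h1 := β.map_mul_left ⟨u, humem'⟩ b
      have h2 : (⟨b * u, lS_mul humem' b⟩ : lS u) = β.toEquiv.symm ⟨v, hvmem'⟩ :=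
        Subtype.ext hbu
      rw [h2, hβb] at h1
      exact h1.symm
  tfae_have 4 → 3 := by
    rintro ⟨a, b, hab, hba⟩
    refine ⟨u * a * v, v * b * u, ⟨a, rfl⟩, ⟨b, rfl⟩, ?_, ?_⟩
    · have havb : a * v * b = u := by
        rw [← hba]
        simp only [mul_assoc]
        rw [hab, ← mul_assoc, hab, hu]
      calc u * a * v * (v * b * u)
          = u * (a * v * (v * b)) * u := by simp only [mul_assoc]
        _ = u * (a * (v * v) * b) * u := by simp only [mul_assoc]
        _ = u := by rw [hv, havb, hu, hu]
    · have hbua : b * u * a = v := by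
        rw [← hab]
        simp only [mul_assoc]
        rw [hba, ← mul_assoc, hba, hv]
      calc v * b * u * (u * a * v)
          = v * (b * u * (u * a)) * v := by simp only [mul_assoc]
        _ = v * (b * (u * u) * a) * v := by simp only [mul_assoc]
        _ = v := by rw [hu, hbua, hv, hv]
  tfae_have 3 → 4 := by
    rintro ⟨a, b, -, -, hab, hba⟩
    exact ⟨a, b, hab, hba⟩
  tfae_have 3 → 1 := by
    rintro ⟨a, b, ⟨s, hsa⟩, ⟨t, htb⟩, hab, hba⟩
    have hbmem : ∀ x : S, b * x ∈ rS v := fun x =>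
      ⟨t * u * x, by rw [htb]; simp only [mul_assoc]⟩
    have hamem : ∀ x : S, a * x ∈ rS u := fun x =>
      ⟨s * v * x, by rw [hsa]; simp only [mul_assoc]⟩
    have hax : ∀ x ∈ rS u, a * (b * x) = x := by
      rintro x ⟨c, rfl⟩
      rw [← mul_assoc, hab, ← mul_assoc, hu]
    have hbx : ∀ x ∈ rS v, b * (a * x) = x := by
      rintro x ⟨c, rfl⟩
      rw [← mul_assoc, hba, ← mul_assoc, hv]
    refine ⟨⟨⟨fun x => ⟨b * x.1, hbmem x.1⟩, fun x => ⟨a * x.1, hamem x.1⟩,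
      fun x => Subtype.ext (hax x.1 x.2), fun x => Subtype.ext (hbx x.1 x.2)⟩,
      fun x y => ?_⟩⟩
    simp only [Equiv.coe_fn_mk, mul_assoc]
  tfae_have 3 → 2 := by
    rintro ⟨a, b, ⟨s, hsa⟩, ⟨t, htb⟩, hab, hba⟩
    have hamem : ∀ x : S, x * a ∈ lS v := fun x =>
      ⟨x * (u * s), by rw [hsa]; simp only [mul_assoc]⟩
    have hbmem : ∀ x : S, x * b ∈ lS u := fun x =>
      ⟨x * (v * t), by rw [htb]; simp only [mul_assoc]⟩
    have hax : ∀ x ∈ lS u, x * a * b = x := by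
      rintro x ⟨c, rfl⟩
      rw [mul_assoc, hab, mul_assoc, hu]
    have hbx : ∀ x ∈ lS v, x * b * a = x := by
      rintro x ⟨c, rfl⟩
      rw [mul_assoc, hba, mul_assoc, hv]
    refine ⟨⟨⟨fun x => ⟨x.1 * a, hamem x.1⟩, fun x => ⟨x.1 * b, hbmem x.1⟩,
      fun x => Subtype.ext (hax x.1 x.2), fun x => Subtype.ext (hbx x.1 x.2)⟩,
      fun x y => ?_⟩⟩
    simp only [Equiv.coe_fn_mk, mul_assoc]
  tfae_finish
end

section
/- Let S be a semigroup, I and J ideals of S, and α : I → J a semigroup homomorphism which is inner at an idempotent u of I. If v is another idempotent of I with v ≤ u (i.e., uv = vu = v), then α is inner at v. -/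
/-- A (two-sided) ideal of a semigroup. -/
def SgIsIdeal {S : Type*} [Mul S] (I : Set S) : Prop :=
  I.Nonempty ∧ ∀ x ∈ I, ∀ s : S, x * s ∈ I ∧ s * x ∈ I

/-- A map `α` (thought of as a semigroup homomorphism `I → J`) is *inner at* an
idempotent `u ∈ I` if there are `a ∈ uSα(u)` and `b ∈ α(u)Su` with `ab = u`,
`ba = α u`, and `α x = b * x * a` for all `x ∈ uSu`. -/
def InnerAt {S : Type*} [Semigroup S] (I : Set S) (α : S → S) (u : S) : Prop :=
  u ∈ I ∧ ∃ a b : S, (∃ s : S, a = u * s * α u) ∧ (∃ s : S, b = α u * s * u) ∧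
    a * b = u ∧ b * a = α u ∧ ∀ s : S, α (u * s * u) = b * (u * s * u) * a


/-- if a semigroup homomorphism `α : I → J` of ideals of `S` is inner
at an idempotent `u ∈ I` and `v` is an idempotent of `I` with `v ≤ u`
(i.e. `uv = vu = v`), then `α` is inner at `v`. -/
theorem stmt3 {S : Type*} [Semigroup S] (I J : Set S)
    (hI : SgIsIdeal I) (hJ : SgIsIdeal J) (α : S → S)
    (hmap : ∀ x ∈ I, α x ∈ J)
    (hmul : ∀ x ∈ I, ∀ y ∈ I, α (x * y) = α x * α y)
    (u : S) (hu : u * u = u) (hinner : InnerAt I α u)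
    (v : S) (hvI : v ∈ I) (hv : v * v = v) (huv : u * v = v) (hvu : v * u = v) :
    InnerAt I α v := by
  obtain ⟨huI, a, b, ⟨s1, ha⟩, ⟨s2, hb⟩, hab, hba, hαx⟩ := hinner
  have hvuv : u * v * u = v := by rw [huv, hvu]
  have hαv : α v = b * v * a := by
    have h := hαx v
    rwa [hvuv] at h
  -- right-associated rewrite rules
  have r1 : ∀ x : S, a * (b * x) = u * x := fun x => by rw [← mul_assoc, hab]
  have r2 : ∀ x : S, u * (v * x) = v * x := fun x => by rw [← mul_assoc, huv]
  have r3 : ∀ x : S, v * (u * x) = v * x := fun x => by rw [← mul_assoc, hvu]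
  have r4 : ∀ x : S, v * (v * x) = v * x := fun x => by rw [← mul_assoc, hv]
  refine ⟨hvI, v * a * α v, α v * b * v, ⟨a, rfl⟩, ⟨b, rfl⟩, ?_, ?_, ?_⟩
  · simp only [hαv, mul_assoc, r1, r2, r3, r4, hab, huv, hvu, hv]
  · simp only [hαv, mul_assoc, r1, r2, r3, r4, hab, huv, hvu, hv]
  · intro s
    have huvsvu : u * (v * s * v) * u = v * s * v := by
      calc u * (v * s * v) * u = u * v * (s * (v * u)) := by simp only [mul_assoc]
        _ = v * s * v := by rw [huv, hvu, mul_assoc]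
    have hα1 : α (v * s * v) = b * (v * s * v) * a := by
      have h := hαx (v * s * v)
      rwa [huvsvu] at h
    rw [hα1]
    simp only [hαv, mul_assoc, r1, r2, r3, r4, hab, huv, hvu, hv]
end

section
/- Suppose S has a complete set E of minimal non-zero idempotents (i.e., every element of E is minimal and for each non-zero idempotent u ∈ S there is v ∈ E with v ≤ u). Let I, J be ideals of S and α : I → J a semigroup homomorphism. Then α is strongly outer (outer at all non-zero idempotents of S) if and only if α is outer at each u ∈ E. -/
/-- A minimal non-zero idempotent of a semigroup with zero: a non-zero idempotent
which is minimal with respect to the order `w ≤ v ↔ vw = wv = w` among non-zero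
idempotents. -/
def MinIdem {S : Type*} [SemigroupWithZero S] (v : S) : Prop :=
  v ≠ 0 ∧ v * v = v ∧
    ∀ w : S, w ≠ 0 → w * w = w → v * w = w → w * v = w → w = v

/-- if `S` has a complete set `E` of minimal non-zero idempotents,
then a semigroup homomorphism `α : I → J` of ideals of `S` is strongly outer
(outer at every non-zero idempotent of `S`) if and only if it is outer at
each `u ∈ E`. -/
theorem stmt4 {S : Type*} [SemigroupWithZero S] (E : Set S)
    (hEmin : ∀ v ∈ E, MinIdem v)
    (hEcomplete : ∀ u : S, u ≠ 0 → u * u = u → ∃ v ∈ E, u * v = v ∧ v * u = v)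
    (I J : Set S) (hI : SgIsIdeal I) (hJ : SgIsIdeal J) (α : S → S)
    (hmap : ∀ x ∈ I, α x ∈ J)
    (hmul : ∀ x ∈ I, ∀ y ∈ I, α (x * y) = α x * α y) :
    (∀ u : S, u ≠ 0 → u * u = u → ¬ InnerAt I α u) ↔
      (∀ u ∈ E, ¬ InnerAt I α u) := by
  constructor
  · intro h u hu
    obtain ⟨hne, hidem, _⟩ := hEmin u hu
    exact h u hne hidem
  · intro h u hune huidem hinner
    obtain ⟨huI, a, b, ⟨s₀, hs₀⟩, ⟨t₀, ht₀⟩, hab, hba, hα⟩ := hinner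
    obtain ⟨v, hvE, huv, hvu⟩ := hEcomplete u hune huidem
    obtain ⟨hvne, hvv, _⟩ := hEmin v hvE
    have hvI : v ∈ I := by
      have h1 := (hI.2 u huI v).1
      rwa [huv] at h1
    have hαv : α v * α v = α v := by
      have h1 := hmul v hvI v hvI
      rw [hvv] at h1
      exact h1.symm
    have huvu : u * v * u = v := by rw [huv, hvu]
    have hbva : b * v * a = α v := by
      have h1 := hα v
      rw [huvu] at h1
      exact h1.symm
    -- absorption lemmas
    have habsL : ∀ s : S, α v * α (v * s * v) = α (v * s * v) := by
      intro s
      have hsvI : s * v ∈ I := (hI.2 v hvI s).2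
      have h1 : α (v * s * v) = α v * α (s * v) := by
        rw [mul_assoc]; exact hmul v hvI (s * v) hsvI
      rw [h1, ← mul_assoc, hαv]
    have habsR : ∀ s : S, α (v * s * v) * α v = α (v * s * v) := by
      intro s
      have hvsI : v * s ∈ I := (hI.2 v hvI s).1
      have h1 : α (v * s * v) = α (v * s) * α v := hmul (v * s) hvsI v hvI
      rw [h1, mul_assoc, hαv]
    apply h v hvE
    refine ⟨hvI, v * a * α v, α v * b * v, ⟨a, rfl⟩, ⟨b, rfl⟩, ?_, ?_, ?_⟩
    · -- (v*a*αv) * (αv*b*v) = v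
      calc v * a * α v * (α v * b * v)
          = v * (a * (α v * α v) * b) * v := by simp only [mul_assoc]
        _ = v * (a * α v * b) * v := by rw [hαv]
        _ = v * (a * (b * v * a) * b) * v := by rw [← hbva]
        _ = (v * (a * b)) * (v * (a * b)) * v := by simp only [mul_assoc]
        _ = v := by rw [hab, hvu, hvv, hvv]
    · -- (αv*b*v) * (v*a*αv) = αv
      have h1 : α v * b * v * (v * a * α v) = α v * (b * (v * v) * a) * α v := by
        simp only [mul_assoc]
      rw [h1, hvv, hbva, hαv, hαv]
    · intro s
      have hvsv : α (v * s * v) = b * (v * s * v) * a := by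
        have h1 := hα (v * s * v)
        have h2 : u * (v * s * v) * u = v * s * v := by
          rw [show u * (v * s * v) * u = (u * v) * s * (v * u) by simp only [mul_assoc],
            huv, hvu]
        rwa [h2] at h1
      have key : α v * b * v * (v * s * v) * (v * a * α v)
          = α v * (b * (v * s * v) * a) * α v := by
        rw [show α v * b * v * (v * s * v) * (v * a * α v)
            = α v * (b * ((v * v) * s * (v * v)) * a) * α v by simp only [mul_assoc], hvv]
      rw [key, ← hvsv, habsL, habsR]
end

section
/- Let R be a ring graded by an abelian group G such that the identity component R_e contains a non-zero idempotent u. Then R is simple if and only if R is graded simple and the center Z(uRu) of the corner ring uRu is a field. -/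
open scoped DirectSum


section Stmt7Aux

variable {G R : Type*} [CommGroup G] [DecidableEq G] [NonUnitalRing R]
variable (𝒜 : G → AddSubgroup R)

/-- The decomposition equivalence. -/
noncomputable def stmt7E (hdecomp : DirectSum.IsInternal 𝒜) :
    (⨁ g : G, (𝒜 g : Type _)) ≃+ R :=
  AddEquiv.ofBijective (DirectSum.coeAddMonoidHom 𝒜) hdecomp

/-- projection onto the `m`-th component -/
noncomputable def stmt7proj (hdecomp : DirectSum.IsInternal 𝒜) (m : G) : R →+ R :=
  ((𝒜 m).subtype).comp ((DFinsupp.evalAddMonoidHom m).comp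
    (stmt7E 𝒜 hdecomp).symm.toAddMonoidHom)

variable (hdecomp : DirectSum.IsInternal 𝒜)

lemma stmt7proj_mem (m : G) (r : R) : stmt7proj 𝒜 hdecomp m r ∈ 𝒜 m :=
  ((stmt7E 𝒜 hdecomp).symm r m).2

lemma stmt7proj_of_mem {g : G} {x : R} (hx : x ∈ 𝒜 g) (m : G) :
    stmt7proj 𝒜 hdecomp m x = if g = m then x else 0 := by
  have h1 : stmt7E 𝒜 hdecomp (DirectSum.of (fun i => ((𝒜 i) : Type _)) g ⟨x, hx⟩) = x :=
    DirectSum.coeAddMonoidHom_of 𝒜 g ⟨x, hx⟩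
  have h2 : (stmt7E 𝒜 hdecomp).symm x = DirectSum.of (fun i => ((𝒜 i) : Type _)) g ⟨x, hx⟩ :=
    ((AddEquiv.eq_symm_apply _).mpr h1).symm
  show (((stmt7E 𝒜 hdecomp).symm x) m : R) = _
  rw [h2, DirectSum.coe_of_apply]
  split <;> simp

lemma stmt7proj_of_mem_same {g : G} {x : R} (hx : x ∈ 𝒜 g) :
    stmt7proj 𝒜 hdecomp g x = x := by
  rw [stmt7proj_of_mem 𝒜 hdecomp hx, if_pos rfl]

lemma stmt7proj_of_mem_ne {g m : G} {x : R} (hx : x ∈ 𝒜 g) (h : g ≠ m) :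
    stmt7proj 𝒜 hdecomp m x = 0 := by
  rw [stmt7proj_of_mem 𝒜 hdecomp hx, if_neg h]

lemma stmt7_eq_zero (r : R) (h : ∀ m, stmt7proj 𝒜 hdecomp m r = 0) : r = 0 := by
  have h2 : (stmt7E 𝒜 hdecomp).symm r = 0 := by
    refine DFinsupp.ext fun m => ?_
    exact Subtype.ext (h m)
  have := congrArg (stmt7E 𝒜 hdecomp) h2
  rwa [AddEquiv.apply_symm_apply, map_zero] at this

lemma stmt7_supp_finite (r : R) : {m : G | stmt7proj 𝒜 hdecomp m r ≠ 0}.Finite := by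
  classical
  apply Set.Finite.subset (DFinsupp.support ((stmt7E 𝒜 hdecomp).symm r)).finite_toSet
  intro m hm
  simp only [Set.mem_setOf_eq] at hm
  rw [Finset.mem_coe, DFinsupp.mem_support_iff]
  intro h0
  exact hm (by show ((((stmt7E 𝒜 hdecomp).symm r)) m : R) = 0; rw [h0]; rfl)

include hdecomp in
/-- induction on homogeneous components -/
lemma stmt7_ind {P : R → Prop} (h0 : P 0) (hadd : ∀ x y, P x → P y → P (x + y))
    (hhom : ∀ g : G, ∀ x ∈ 𝒜 g, P x) : ∀ r : R, P r := by
  intro r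
  obtain ⟨f, rfl⟩ := (Function.Bijective.surjective hdecomp) r
  refine DirectSum.induction_on f ?_ ?_ ?_
  · rw [map_zero]; exact h0
  · intro i x
    rw [DirectSum.coeAddMonoidHom_of]
    exact hhom i x x.2
  · intro x y hx hy
    rw [map_add]; exact hadd _ _ hx hy

variable (hgmul : ∀ g h : G, ∀ a ∈ 𝒜 g, ∀ b ∈ 𝒜 h, a * b ∈ 𝒜 (g * h))

include hdecomp hgmul in
lemma stmt7proj_mul_left {s : G} {c : R} (hc : c ∈ 𝒜 s) (r : R) (m : G) :
    stmt7proj 𝒜 hdecomp m (c * r) = c * stmt7proj 𝒜 hdecomp (s⁻¹ * m) r := by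
  revert m
  refine stmt7_ind 𝒜 hdecomp (P := fun r => ∀ m,
      stmt7proj 𝒜 hdecomp m (c * r) = c * stmt7proj 𝒜 hdecomp (s⁻¹ * m) r) ?_ ?_ ?_ r
  · intro m; simp
  · intro x y hx hy m
    rw [mul_add, map_add, map_add, mul_add, hx, hy]
  · intro g x hx m
    rw [stmt7proj_of_mem 𝒜 hdecomp (hgmul s g c hc x hx),
      stmt7proj_of_mem 𝒜 hdecomp hx]
    by_cases h : s * g = m
    · rw [if_pos h, if_pos (by rw [← h]; group)]
    · rw [if_neg h, if_neg (fun hh => h (by rw [hh]; group)), mul_zero]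

include hdecomp hgmul in
lemma stmt7proj_mul_right {t : G} {d : R} (hd : d ∈ 𝒜 t) (r : R) (m : G) :
    stmt7proj 𝒜 hdecomp m (r * d) = stmt7proj 𝒜 hdecomp (m * t⁻¹) r * d := by
  revert m
  refine stmt7_ind 𝒜 hdecomp (P := fun r => ∀ m,
      stmt7proj 𝒜 hdecomp m (r * d) = stmt7proj 𝒜 hdecomp (m * t⁻¹) r * d) ?_ ?_ ?_ r
  · intro m; simp
  · intro x y hx hy m
    rw [add_mul, map_add, map_add, add_mul, hx, hy]
  · intro g x hx m
    rw [stmt7proj_of_mem 𝒜 hdecomp (hgmul g t x hx d hd),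
      stmt7proj_of_mem 𝒜 hdecomp hx]
    by_cases h : g * t = m
    · rw [if_pos h, if_pos (by rw [← h]; group)]
    · rw [if_neg h, if_neg (fun hh => h (by rw [hh]; group)), zero_mul]

end Stmt7Aux

section Gen
variable {G R : Type*} [CommGroup G] [DecidableEq G] [NonUnitalRing R]
variable (𝒜 : G → AddSubgroup R)

/-- generators of the two-sided ideal generated by `x`, by homogeneous elements -/
def stmt7T (x : R) : Set R :=
  {w | w = x ∨ (∃ s c, c ∈ 𝒜 s ∧ w = c * x) ∨ (∃ t d, d ∈ 𝒜 t ∧ w = x * d) ∨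
    (∃ s t c d, c ∈ 𝒜 s ∧ d ∈ 𝒜 t ∧ w = c * x * d)}

variable (hdecomp : DirectSum.IsInternal 𝒜)
variable (hgmul : ∀ g h : G, ∀ a ∈ 𝒜 g, ∀ b ∈ 𝒜 h, a * b ∈ 𝒜 (g * h))

include hgmul in
lemma stmt7T_mul_left {s : G} {c : R} (hc : c ∈ 𝒜 s) {x w : R} (hw : w ∈ stmt7T 𝒜 x) :
    c * w ∈ stmt7T 𝒜 x := by
  rcases hw with rfl | ⟨s', c', hc', rfl⟩ | ⟨t, d, hd, rfl⟩ | ⟨s', t, c', d, hc', hd, rfl⟩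
  · exact Or.inr (Or.inl ⟨s, c, hc, rfl⟩)
  · exact Or.inr (Or.inl ⟨s * s', c * c', hgmul _ _ _ hc _ hc', (mul_assoc _ _ _).symm⟩)
  · exact Or.inr (Or.inr (Or.inr ⟨s, t, c, d, hc, hd, (mul_assoc _ _ _).symm⟩))
  · refine Or.inr (Or.inr (Or.inr ⟨s * s', t, c * c', d, hgmul _ _ _ hc _ hc', hd, ?_⟩))
    rw [← mul_assoc, ← mul_assoc]

include hgmul in
lemma stmt7T_mul_right {t : G} {d : R} (hd : d ∈ 𝒜 t) {x w : R} (hw : w ∈ stmt7T 𝒜 x) :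
    w * d ∈ stmt7T 𝒜 x := by
  rcases hw with rfl | ⟨s, c, hc, rfl⟩ | ⟨t', d', hd', rfl⟩ | ⟨s, t', c, d', hc, hd', rfl⟩
  · exact Or.inr (Or.inr (Or.inl ⟨t, d, hd, rfl⟩))
  · exact Or.inr (Or.inr (Or.inr ⟨s, t, c, d, hc, hd, rfl⟩))
  · exact Or.inr (Or.inr (Or.inl ⟨t' * t, d' * d, hgmul _ _ _ hd' _ hd, (mul_assoc _ _ _)⟩))
  · exact Or.inr (Or.inr (Or.inr ⟨s, t' * t, c, d' * d, hc, hgmul _ _ _ hd' _ hd,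
      by rw [mul_assoc (c * x)]⟩))

include hdecomp hgmul in
lemma stmt7_closure_mul_left (x : R) (r : R) {w : R}
    (hw : w ∈ AddSubgroup.closure (stmt7T 𝒜 x)) :
    r * w ∈ AddSubgroup.closure (stmt7T 𝒜 x) := by
  have hhom : ∀ (g : G), ∀ c ∈ 𝒜 g, ∀ w, w ∈ AddSubgroup.closure (stmt7T 𝒜 x) →
      c * w ∈ AddSubgroup.closure (stmt7T 𝒜 x) := by
    intro g c hc w hw
    induction hw using AddSubgroup.closure_induction with
    | mem y hy => exact AddSubgroup.subset_closure (stmt7T_mul_left 𝒜 hgmul hc hy)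
    | zero => rw [mul_zero]; exact zero_mem _
    | add y z _ _ hy hz => rw [mul_add]; exact add_mem hy hz
    | neg y _ hy => rw [mul_neg]; exact neg_mem hy
  revert hw
  refine stmt7_ind 𝒜 hdecomp
    (P := fun r => w ∈ AddSubgroup.closure (stmt7T 𝒜 x) → r * w ∈ AddSubgroup.closure (stmt7T 𝒜 x))
    ?_ ?_ ?_ r
  · intro hw; rw [zero_mul]; exact zero_mem _
  · intro a b ha hb hw; rw [add_mul]; exact add_mem (ha hw) (hb hw)
  · intro g c hc hw; exact hhom g c hc w hw

include hdecomp hgmul in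
lemma stmt7_closure_mul_right (x : R) (r : R) {w : R}
    (hw : w ∈ AddSubgroup.closure (stmt7T 𝒜 x)) :
    w * r ∈ AddSubgroup.closure (stmt7T 𝒜 x) := by
  have hhom : ∀ (g : G), ∀ d ∈ 𝒜 g, ∀ w, w ∈ AddSubgroup.closure (stmt7T 𝒜 x) →
      w * d ∈ AddSubgroup.closure (stmt7T 𝒜 x) := by
    intro g d hd w hw
    induction hw using AddSubgroup.closure_induction with
    | mem y hy => exact AddSubgroup.subset_closure (stmt7T_mul_right 𝒜 hgmul hd hy)
    | zero => rw [zero_mul]; exact zero_mem _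
    | add y z _ _ hy hz => rw [add_mul]; exact add_mem hy hz
    | neg y _ hy => rw [neg_mul]; exact neg_mem hy
  revert hw
  refine stmt7_ind 𝒜 hdecomp
    (P := fun r => w ∈ AddSubgroup.closure (stmt7T 𝒜 x) → w * r ∈ AddSubgroup.closure (stmt7T 𝒜 x))
    ?_ ?_ ?_ r
  · intro hw; rw [mul_zero]; exact zero_mem _
  · intro a b ha hb hw; rw [mul_add]; exact add_mem (ha hw) (hb hw)
  · intro g d hd hw; exact hhom g d hd w hw

include hdecomp hgmul in
lemma stmt7_gen
    (hgr : ∀ I : TwoSidedIdeal R,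
        (∀ r ∈ I, r ∈ AddSubgroup.closure (⋃ g : G, ((I : Set R) ∩ (𝒜 g : Set R)))) →
        I = ⊥ ∨ I = ⊤)
    {g0 : G} {x : R} (hx : x ∈ 𝒜 g0) (hx0 : x ≠ 0) :
    ∀ r : R, r ∈ AddSubgroup.closure (stmt7T 𝒜 x) := by
  set M : TwoSidedIdeal R := TwoSidedIdeal.mk'
    (AddSubgroup.closure (stmt7T 𝒜 x) : Set R)
    (zero_mem _) (fun ha hb => add_mem ha hb) (fun ha => neg_mem ha)
    (fun {r w} hw => stmt7_closure_mul_left 𝒜 hdecomp hgmul x r hw)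
    (fun {w r} hw => stmt7_closure_mul_right 𝒜 hdecomp hgmul x r hw) with hM
  have hmem : ∀ w : R, w ∈ M ↔ w ∈ AddSubgroup.closure (stmt7T 𝒜 x) := by
    intro w; rw [hM, TwoSidedIdeal.mem_mk']; rfl
  have hxM : x ∈ M := (hmem x).mpr (AddSubgroup.subset_closure (Or.inl rfl))
  have hgraded : ∀ r ∈ M, r ∈ AddSubgroup.closure (⋃ g : G, ((M : Set R) ∩ (𝒜 g : Set R))) := by
    intro r hr
    refine AddSubgroup.closure_mono ?_ ((hmem r).mp hr)
    intro w hw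
    have hwM : w ∈ (M : Set R) := (hmem w).mpr (AddSubgroup.subset_closure hw)
    rcases hw with rfl | ⟨s, c, hc, rfl⟩ | ⟨t, d, hd, rfl⟩ | ⟨s, t, c, d, hc, hd, rfl⟩
    · exact Set.mem_iUnion.mpr ⟨g0, hwM, hx⟩
    · exact Set.mem_iUnion.mpr ⟨s * g0, hwM, hgmul _ _ _ hc _ hx⟩
    · exact Set.mem_iUnion.mpr ⟨g0 * t, hwM, hgmul _ _ _ hx _ hd⟩
    · exact Set.mem_iUnion.mpr ⟨s * g0 * t, hwM, hgmul _ _ _ (hgmul _ _ _ hc _ hx) _ hd⟩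
  rcases hgr M hgraded with hbot | htop
  · rw [hbot] at hxM
    exact absurd ((TwoSidedIdeal.mem_bot R).mp hxM) hx0
  · intro r
    have : r ∈ M := htop ▸ TwoSidedIdeal.mem_top R
    exact (hmem r).mp this

end Gen



/-- let `R` be a (possibly non-unital) ring graded by an abelian
group `G` such that the identity component `𝒜 1` contains a non-zero idempotent
`u`.  Then `R` is simple if and only if `R` is graded simple and the center
`Z(uRu)` of the corner ring `uRu` is a field (every non-zero central element of
`uRu` has an inverse in `Z(uRu)`, with identity element `u`). -/
theorem stmt7 {G R : Type*} [CommGroup G] [DecidableEq G] [NonUnitalRing R]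
    (𝒜 : G → AddSubgroup R) (hdecomp : DirectSum.IsInternal 𝒜)
    (hgmul : ∀ g h : G, ∀ a ∈ 𝒜 g, ∀ b ∈ 𝒜 h, a * b ∈ 𝒜 (g * h))
    (u : R) (humem : u ∈ 𝒜 (1 : G)) (hu0 : u ≠ 0) (huid : u * u = u) :
    (∀ I : TwoSidedIdeal R, I = ⊥ ∨ I = ⊤) ↔
      ((∀ I : TwoSidedIdeal R,
          (∀ r ∈ I, r ∈ AddSubgroup.closure (⋃ g : G, ((I : Set R) ∩ (𝒜 g : Set R)))) →
          I = ⊥ ∨ I = ⊤) ∧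
        ∀ x : R, (∃ r : R, x = u * r * u) →
          (∀ y : R, (∃ r : R, y = u * r * u) → x * y = y * x) → x ≠ 0 →
          ∃ y : R, (∃ r : R, y = u * r * u) ∧
            (∀ z : R, (∃ r : R, z = u * r * u) → y * z = z * y) ∧
            x * y = u ∧ y * x = u) := by
  have huu : ∀ X : R, u * (u * X) = u * X := fun X => by rw [← mul_assoc, huid]
  constructor
  · -- easy direction : simple implies graded simple + field
    intro hs
    refine ⟨fun I _ => hs I, ?_⟩
    rintro x ⟨r0, hxr⟩ hcomm hx0
    -- the two-sided ideal generated by x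
    set T : Set R := {w | w = x ∨ (∃ r, w = r * x) ∨ (∃ s, w = x * s) ∨
      (∃ r s, w = r * x * s)} with hT
    have hTleft : ∀ (r : R) {w : R}, w ∈ T → r * w ∈ T := by
      rintro r w (rfl | ⟨r', rfl⟩ | ⟨s, rfl⟩ | ⟨r', s, rfl⟩)
      · exact Or.inr (Or.inl ⟨r, rfl⟩)
      · exact Or.inr (Or.inl ⟨r * r', (mul_assoc _ _ _).symm⟩)
      · exact Or.inr (Or.inr (Or.inr ⟨r, s, (mul_assoc _ _ _).symm⟩))
      · exact Or.inr (Or.inr (Or.inr ⟨r * r', s, by rw [← mul_assoc, ← mul_assoc]⟩))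
    have hTright : ∀ (r : R) {w : R}, w ∈ T → w * r ∈ T := by
      rintro r w (rfl | ⟨r', rfl⟩ | ⟨s, rfl⟩ | ⟨r', s, rfl⟩)
      · exact Or.inr (Or.inr (Or.inl ⟨r, rfl⟩))
      · exact Or.inr (Or.inr (Or.inr ⟨r', r, rfl⟩))
      · exact Or.inr (Or.inr (Or.inl ⟨s * r, mul_assoc _ _ _⟩))
      · exact Or.inr (Or.inr (Or.inr ⟨r', s * r, by rw [← mul_assoc]⟩))
    have hclleft : ∀ (r : R) {w : R}, w ∈ AddSubgroup.closure T →
        r * w ∈ AddSubgroup.closure T := by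
      intro r w hw
      induction hw using AddSubgroup.closure_induction with
      | mem y hy => exact AddSubgroup.subset_closure (hTleft r hy)
      | zero => rw [mul_zero]; exact zero_mem _
      | add y z _ _ hy hz => rw [mul_add]; exact add_mem hy hz
      | neg y _ hy => rw [mul_neg]; exact neg_mem hy
    have hclright : ∀ (r : R) {w : R}, w ∈ AddSubgroup.closure T →
        w * r ∈ AddSubgroup.closure T := by
      intro r w hw
      induction hw using AddSubgroup.closure_induction with
      | mem y hy => exact AddSubgroup.subset_closure (hTright r hy)
      | zero => rw [zero_mul]; exact zero_mem _
      | add y z _ _ hy hz => rw [add_mul]; exact add_mem hy hz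
      | neg y _ hy => rw [neg_mul]; exact neg_mem hy
    set M : TwoSidedIdeal R := TwoSidedIdeal.mk'
      (AddSubgroup.closure T : Set R)
      (zero_mem _) (fun ha hb => add_mem ha hb) (fun ha => neg_mem ha)
      (fun {r w} hw => hclleft r hw) (fun {w r} hw => hclright r hw) with hM
    have hmemM : ∀ w : R, w ∈ M ↔ w ∈ AddSubgroup.closure T := by
      intro w; rw [hM, TwoSidedIdeal.mem_mk']; rfl
    have hxM : x ∈ M := (hmemM x).mpr (AddSubgroup.subset_closure (Or.inl rfl))
    have huM : u ∈ AddSubgroup.closure T := by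
      rcases hs M with hbot | htop
      · rw [hbot] at hxM
        exact absurd ((TwoSidedIdeal.mem_bot R).mp hxM) hx0
      · exact (hmemM u).mp (htop ▸ TwoSidedIdeal.mem_top R)
    -- extract a "quasi-inverse" from the representation of u
    have key : ∀ w ∈ AddSubgroup.closure T, ∃ c : R,
        (∃ rr : R, c = u * rr * u) ∧ x * c = u * w * u ∧ c * x = u * w * u := by
      intro w hw
      induction hw using AddSubgroup.closure_induction with
      | mem y hy =>
          rcases hy with rfl | ⟨r, rfl⟩ | ⟨s, rfl⟩ | ⟨r, s, rfl⟩
          · refine ⟨u, ⟨u, by rw [huid, huid]⟩, ?_, ?_⟩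
            · simp only [hxr, mul_assoc, huid, huu]
            · simp only [hxr, mul_assoc, huid, huu]
          · refine ⟨u * r * u, ⟨r, rfl⟩, ?_, ?_⟩
            · rw [hcomm (u * r * u) ⟨r, rfl⟩]
              simp only [hxr, mul_assoc, huid, huu]
            · simp only [hxr, mul_assoc, huid, huu]
          · refine ⟨u * s * u, ⟨s, rfl⟩, ?_, ?_⟩
            · simp only [hxr, mul_assoc, huid, huu]
            · rw [← hcomm (u * s * u) ⟨s, rfl⟩]
              simp only [hxr, mul_assoc, huid, huu]
          · refine ⟨(u * r * u) * (u * s * u),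
              ⟨r * u * s, by simp only [mul_assoc, huid, huu]⟩, ?_, ?_⟩
            · rw [← mul_assoc, hcomm (u * r * u) ⟨r, rfl⟩, mul_assoc]
              simp only [hxr, mul_assoc, huid, huu]
            · rw [mul_assoc, ← hcomm (u * s * u) ⟨s, rfl⟩]
              simp only [hxr, mul_assoc, huid, huu]
      | zero =>
          exact ⟨0, ⟨0, by rw [mul_zero, zero_mul]⟩,
            by rw [mul_zero, mul_zero, zero_mul],
            by rw [zero_mul, mul_zero, zero_mul]⟩
      | add y z _ _ hy hz =>
          obtain ⟨c1, ⟨rr1, hc1⟩, h11, h12⟩ := hy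
          obtain ⟨c2, ⟨rr2, hc2⟩, h21, h22⟩ := hz
          refine ⟨c1 + c2, ⟨rr1 + rr2, by rw [hc1, hc2, mul_add, add_mul]⟩, ?_, ?_⟩
          · rw [mul_add, h11, h21, mul_add, add_mul]
          · rw [add_mul, h12, h22, mul_add, add_mul]
      | neg y _ hy =>
          obtain ⟨c, ⟨rr, hc⟩, h1, h2⟩ := hy
          refine ⟨-c, ⟨-rr, by rw [hc, mul_neg, neg_mul]⟩, ?_, ?_⟩
          · rw [mul_neg, h1, mul_neg, neg_mul]
          · rw [neg_mul, h2, mul_neg, neg_mul]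
    obtain ⟨c, hcform, hxc, hcx⟩ := key u huM
    have huuu : u * u * u = u := by rw [huid, huid]
    rw [huuu] at hxc hcx
    refine ⟨c, hcform, ?_, hxc, hcx⟩
    rintro z ⟨t, hz⟩
    obtain ⟨rr0, hc⟩ := hcform
    have huz : u * z = z := by simp only [hz, mul_assoc, huu]
    have hczu : (c * z) * u = c * z := by
      simp only [hc, hz, mul_assoc, huid, huu]
    have s1 : (c * z) * x = z := by
      rw [mul_assoc, ← hcomm z ⟨t, hz⟩, ← mul_assoc, hcx, huz]
    have h2 : z * c = c * z := by
      calc z * c = ((c * z) * x) * c := by rw [s1]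
        _ = (c * z) * (x * c) := by rw [mul_assoc]
        _ = c * z := by rw [hxc, hczu]
    exact h2.symm
  · -- hard direction
    rintro ⟨hgr, hfield⟩ I
    by_cases hIbot : I = ⊥
    · exact Or.inl hIbot
    right
    -- a nonzero element of I
    have hex : ∃ a : R, a ∈ I ∧ a ≠ 0 := by
      by_contra h
      push_neg at h
      apply hIbot
      refine SetLike.ext fun y => ⟨fun hy => (TwoSidedIdeal.mem_bot R).mpr (h y hy),
        fun hy => ?_⟩
      rw [(TwoSidedIdeal.mem_bot R).mp hy]
      exact TwoSidedIdeal.zero_mem I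
    set ν : R → ℕ := fun r => {m : G | stmt7proj 𝒜 hdecomp m r ≠ 0}.ncard with hν
    set S : Set ℕ := {k : ℕ | ∃ r : R, r ∈ I ∧ r ≠ 0 ∧ ν r = k} with hS
    have hSne : S.Nonempty := by
      obtain ⟨a, haI, hane⟩ := hex
      exact ⟨ν a, a, haI, hane, rfl⟩
    obtain ⟨a0, ha0I, ha0ne, ha0n⟩ : ∃ r : R, r ∈ I ∧ r ≠ 0 ∧ ν r = sInf S :=
      Nat.sInf_mem hSne
    set n : ℕ := sInf S with hn
    have hmin : ∀ r : R, r ∈ I → r ≠ 0 → n ≤ ν r := fun r h1 h2 =>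
      Nat.sInf_le ⟨r, h1, h2, rfl⟩
    -- a nonzero homogeneous component of a0
    obtain ⟨g0, hg0⟩ : ∃ g0 : G, stmt7proj 𝒜 hdecomp g0 a0 ≠ 0 := by
      by_contra h
      push_neg at h
      exact ha0ne (stmt7_eq_zero 𝒜 hdecomp a0 h)
    set x : R := stmt7proj 𝒜 hdecomp g0 a0 with hx
    have hxmem : x ∈ 𝒜 g0 := stmt7proj_mem 𝒜 hdecomp g0 a0
    -- u lies in the graded ideal generated by x
    have hu_cl : u ∈ AddSubgroup.closure (stmt7T 𝒜 x) :=
      stmt7_gen 𝒜 hdecomp hgmul hgr hxmem hg0 u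
    -- transfer: an element b of I with identity component u and controlled support
    have htrans : ∀ w ∈ AddSubgroup.closure (stmt7T 𝒜 x), ∃ b : R, b ∈ I ∧
        stmt7proj 𝒜 hdecomp 1 b = stmt7proj 𝒜 hdecomp 1 w ∧
        ∀ m : G, stmt7proj 𝒜 hdecomp (g0 * m) a0 = 0 → stmt7proj 𝒜 hdecomp m b = 0 := by
      intro w hw
      induction hw using AddSubgroup.closure_induction with
      | mem w hw =>
          rcases hw with rfl | ⟨s, c, hc, rfl⟩ | ⟨t, d, hd, rfl⟩ | ⟨s, t, c, d, hc, hd, rfl⟩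
          · by_cases hg : g0 = 1
            · refine ⟨a0, ha0I, ?_, ?_⟩
              · conv_rhs => rw [stmt7proj_of_mem_same 𝒜 hdecomp
                  (show x ∈ 𝒜 1 by rw [← hg]; exact hxmem)]
                rw [hx, hg]
              · intro m hm
                rwa [hg, one_mul] at hm
            · exact ⟨0, TwoSidedIdeal.zero_mem I,
                by rw [stmt7proj_of_mem_ne 𝒜 hdecomp hxmem hg, map_zero],
                fun m _ => map_zero _⟩
          · by_cases hg : s * g0 = 1
            · have hsinv : s⁻¹ = g0 := inv_eq_of_mul_eq_one_right hg
              refine ⟨c * a0, TwoSidedIdeal.mul_mem_left I c a0 ha0I, ?_, ?_⟩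
              · rw [stmt7proj_mul_left 𝒜 hdecomp hgmul hc, mul_one, hsinv,
                  stmt7proj_of_mem_same 𝒜 hdecomp
                    (show c * x ∈ 𝒜 1 by rw [← hg]; exact hgmul s g0 c hc x hxmem), ← hx]
              · intro m hm
                rw [stmt7proj_mul_left 𝒜 hdecomp hgmul hc, hsinv, hm, mul_zero]
            · exact ⟨0, TwoSidedIdeal.zero_mem I,
                by rw [stmt7proj_of_mem_ne 𝒜 hdecomp (hgmul s g0 c hc x hxmem) hg,
                  map_zero],
                fun m _ => map_zero _⟩
          · by_cases hg : g0 * t = 1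
            · have htinv : t⁻¹ = g0 := inv_eq_of_mul_eq_one_left hg
              refine ⟨a0 * d, TwoSidedIdeal.mul_mem_right I a0 d ha0I, ?_, ?_⟩
              · rw [stmt7proj_mul_right 𝒜 hdecomp hgmul hd, one_mul, htinv,
                  stmt7proj_of_mem_same 𝒜 hdecomp
                    (show x * d ∈ 𝒜 1 by rw [← hg]; exact hgmul g0 t x hxmem d hd), ← hx]
              · intro m hm
                rw [stmt7proj_mul_right 𝒜 hdecomp hgmul hd, htinv, mul_comm m g0, hm,
                  zero_mul]
            · exact ⟨0, TwoSidedIdeal.zero_mem I,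
                by rw [stmt7proj_of_mem_ne 𝒜 hdecomp (hgmul g0 t x hxmem d hd) hg,
                  map_zero],
                fun m _ => map_zero _⟩
          · by_cases hg : s * g0 * t = 1
            · have hsinv : s⁻¹ = g0 * t :=
                inv_eq_of_mul_eq_one_right (by rw [← mul_assoc]; exact hg)
              have hwmem : c * x * d ∈ 𝒜 1 := by rw [← hg]; exact hgmul _ _ _ (hgmul s g0 c hc x hxmem) d hd
              have hidx : ∀ m : G, s⁻¹ * (m * t⁻¹) = g0 * m := by
                intro m; rw [hsinv, mul_assoc, mul_comm t (m * t⁻¹), inv_mul_cancel_right]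
              refine ⟨c * a0 * d, TwoSidedIdeal.mul_mem_right I _ d
                (TwoSidedIdeal.mul_mem_left I c a0 ha0I), ?_, ?_⟩
              · rw [stmt7proj_mul_right 𝒜 hdecomp hgmul hd,
                  stmt7proj_mul_left 𝒜 hdecomp hgmul hc, hidx 1, mul_one,
                  stmt7proj_of_mem_same 𝒜 hdecomp hwmem, ← hx]
              · intro m hm
                rw [stmt7proj_mul_right 𝒜 hdecomp hgmul hd,
                  stmt7proj_mul_left 𝒜 hdecomp hgmul hc, hidx m, hm, mul_zero, zero_mul]
            · exact ⟨0, TwoSidedIdeal.zero_mem I,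
                by rw [stmt7proj_of_mem_ne 𝒜 hdecomp
                    (hgmul _ _ _ (hgmul s g0 c hc x hxmem) d hd) hg, map_zero],
                fun m _ => map_zero _⟩
      | zero => exact ⟨0, TwoSidedIdeal.zero_mem I, rfl, fun m _ => map_zero _⟩
      | add w1 w2 _ _ h1 h2 =>
          obtain ⟨b1, hb1I, hb11, hb1s⟩ := h1
          obtain ⟨b2, hb2I, hb21, hb2s⟩ := h2
          refine ⟨b1 + b2, TwoSidedIdeal.add_mem I hb1I hb2I, ?_, ?_⟩
          · rw [map_add, map_add, hb11, hb21]
          · intro m hm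
            rw [map_add, hb1s m hm, hb2s m hm, add_zero]
      | neg w _ h =>
          obtain ⟨b, hbI, hb1, hbs⟩ := h
          refine ⟨-b, TwoSidedIdeal.neg_mem I hbI, ?_, ?_⟩
          · rw [map_neg, map_neg, hb1]
          · intro m hm
            rw [map_neg, hbs m hm, neg_zero]
    obtain ⟨b, hbI, hb1, hbs⟩ := htrans u hu_cl
    rw [stmt7proj_of_mem_same 𝒜 hdecomp humem] at hb1
    -- the normalized element a = u b u
    set a : R := u * b * u with ha
    have haI : a ∈ I := TwoSidedIdeal.mul_mem_right I _ u
      (TwoSidedIdeal.mul_mem_left I u b hbI)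
    have hproja : ∀ m : G, stmt7proj 𝒜 hdecomp m a = u * stmt7proj 𝒜 hdecomp m b * u := by
      intro m
      have h1 : stmt7proj 𝒜 hdecomp m (u * b * u) =
          stmt7proj 𝒜 hdecomp (m * 1⁻¹) (u * b) * u :=
        stmt7proj_mul_right 𝒜 hdecomp hgmul humem (u * b) m
      have h2 : stmt7proj 𝒜 hdecomp (m * 1⁻¹) (u * b) =
          u * stmt7proj 𝒜 hdecomp (1⁻¹ * (m * 1⁻¹)) b :=
        stmt7proj_mul_left 𝒜 hdecomp hgmul humem b (m * 1⁻¹)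
      have h3 : (1 : G)⁻¹ * (m * 1⁻¹) = m := by group
      rw [ha, h1, h2, h3]
    have ha1 : stmt7proj 𝒜 hdecomp 1 a = u := by
      rw [hproja 1, hb1, huid, huid]
    have hane : a ≠ 0 := by
      intro h
      rw [h, map_zero] at ha1
      exact hu0 ha1.symm
    have hasupp : ∀ m : G, stmt7proj 𝒜 hdecomp m a ≠ 0 →
        stmt7proj 𝒜 hdecomp (g0 * m) a0 ≠ 0 := by
      intro m hm h0
      exact hm (by rw [hproja m, hbs m h0, mul_zero, zero_mul])
    -- minimality of the support of a
    have hfina : {m : G | stmt7proj 𝒜 hdecomp m a ≠ 0}.Finite := stmt7_supp_finite 𝒜 hdecomp a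
    have hνa : ν a = n := by
      have hfin0 : {m : G | stmt7proj 𝒜 hdecomp m a0 ≠ 0}.Finite :=
        stmt7_supp_finite 𝒜 hdecomp a0
      have hsub : {m : G | stmt7proj 𝒜 hdecomp m a ≠ 0} ⊆
          (fun m => g0⁻¹ * m) '' {m : G | stmt7proj 𝒜 hdecomp m a0 ≠ 0} := by
        intro m hm
        exact ⟨g0 * m, hasupp m hm, by group⟩
      have h1 : ν a ≤ ν a0 := by
        rw [hν]
        calc {m : G | stmt7proj 𝒜 hdecomp m a ≠ 0}.ncard
            ≤ ((fun m => g0⁻¹ * m) '' {m : G | stmt7proj 𝒜 hdecomp m a0 ≠ 0}).ncard :=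
              Set.ncard_le_ncard hsub (hfin0.image _)
          _ = {m : G | stmt7proj 𝒜 hdecomp m a0 ≠ 0}.ncard :=
              Set.ncard_image_of_injective _ (mul_right_injective g0⁻¹)
      exact le_antisymm (ha0n ▸ h1) (hmin a haI hane)
    -- a is central in uRu
    have hcent : ∀ r : R, (u * r * u) * a = a * (u * r * u) := by
      refine stmt7_ind 𝒜 hdecomp ?_ ?_ ?_
      · simp only [mul_zero, zero_mul]
      · intro r1 r2 h1 h2
        have e : u * (r1 + r2) * u = u * r1 * u + u * r2 * u := by
          rw [mul_add, add_mul]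
        rw [e, add_mul, mul_add, h1, h2]
      · intro t r hr
        have hvmem : u * r * u ∈ 𝒜 t := by
          have h1 : u * r ∈ 𝒜 (1 * t) := hgmul _ _ _ humem _ hr
          rw [one_mul] at h1
          have h2 : u * r * u ∈ 𝒜 (t * 1) := hgmul _ _ _ h1 _ humem
          rwa [mul_one] at h2
        set v : R := u * r * u with hv
        have hvu : v * u = v := by rw [hv, mul_assoc, huid]
        have huv : u * v = v := by rw [hv]; simp only [mul_assoc, huu]
        set d : R := v * a - a * v with hd
        have hdI : d ∈ I := TwoSidedIdeal.sub_mem I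
          (TwoSidedIdeal.mul_mem_left I v a haI) (TwoSidedIdeal.mul_mem_right I a v haI)
        have hprojd : ∀ m : G, stmt7proj 𝒜 hdecomp m d =
            v * stmt7proj 𝒜 hdecomp (t⁻¹ * m) a - stmt7proj 𝒜 hdecomp (t⁻¹ * m) a * v := by
          intro m
          rw [hd, map_sub, stmt7proj_mul_left 𝒜 hdecomp hgmul hvmem,
            stmt7proj_mul_right 𝒜 hdecomp hgmul hvmem, mul_comm m t⁻¹]
        have hd0 : d = 0 := by
          by_contra hdne
          have hdsub : {m : G | stmt7proj 𝒜 hdecomp m d ≠ 0} ⊆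
              (fun m => t * m) '' ({m : G | stmt7proj 𝒜 hdecomp m a ≠ 0} \ {1}) := by
            intro m hm
            simp only [Set.mem_setOf_eq] at hm
            have hta : stmt7proj 𝒜 hdecomp (t⁻¹ * m) a ≠ 0 := by
              intro h0
              rw [hprojd m, h0, mul_zero, zero_mul, sub_zero] at hm
              exact hm rfl
            have htne : t⁻¹ * m ≠ 1 := by
              intro h1
              rw [hprojd m, h1, ha1, hvu, huv, sub_self] at hm
              exact hm rfl
            exact ⟨t⁻¹ * m, ⟨hta, htne⟩, by group⟩
          have hdlt : ν d < n := by
            rw [hν]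
            calc {m : G | stmt7proj 𝒜 hdecomp m d ≠ 0}.ncard
                ≤ ((fun m => t * m) ''
                    ({m : G | stmt7proj 𝒜 hdecomp m a ≠ 0} \ {1})).ncard :=
                  Set.ncard_le_ncard hdsub ((hfina.diff).image _)
              _ = ({m : G | stmt7proj 𝒜 hdecomp m a ≠ 0} \ {1}).ncard :=
                  Set.ncard_image_of_injective _ (mul_right_injective t)
              _ < {m : G | stmt7proj 𝒜 hdecomp m a ≠ 0}.ncard := by
                  refine Set.ncard_lt_ncard ?_ hfina
                  refine (Set.ssubset_iff_of_subset Set.diff_subset).mpr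
                    ⟨1, ?_, fun hc => hc.2 rfl⟩
                  simp only [Set.mem_setOf_eq, ha1]
                  exact hu0
              _ = n := hνa
          exact absurd (hmin d hdI hdne) (not_le.mpr hdlt)
        have := sub_eq_zero.mp hd0
        exact this
    -- apply the field hypothesis to a
    obtain ⟨y, _, _, hay, _⟩ := hfield a ⟨b, rfl⟩
      (fun y => fun ⟨r, hy⟩ => by rw [hy]; exact (hcent r).symm) hane
    have huI : u ∈ I := hay ▸ TwoSidedIdeal.mul_mem_right I a y haI
    -- u generates everything
    have hgenu := stmt7_gen 𝒜 hdecomp hgmul hgr humem hu0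
    have hallI : ∀ r : R, r ∈ I := by
      intro r
      have hr := hgenu r
      induction hr using AddSubgroup.closure_induction with
      | mem w hw =>
          rcases hw with rfl | ⟨s, c, _, rfl⟩ | ⟨t, dd, _, rfl⟩ | ⟨s, t, c, dd, _, _, rfl⟩
          · exact huI
          · exact TwoSidedIdeal.mul_mem_left I c u huI
          · exact TwoSidedIdeal.mul_mem_right I u dd huI
          · exact TwoSidedIdeal.mul_mem_right I _ dd (TwoSidedIdeal.mul_mem_left I c u huI)
      | zero => exact TwoSidedIdeal.zero_mem I
      | add y z _ _ hy hz => exact TwoSidedIdeal.add_mem I hy hz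
      | neg y _ hy => exact TwoSidedIdeal.neg_mem I hy
    exact eq_top_iff.mpr (TwoSidedIdeal.le_iff.mpr fun y _ => hallI y)
end

section
/- If α is a partial action of a group G on a ring A such that the partial skew group ring A ⋆_α G is simple, then α is injective, i.e., there is no non-identity g ∈ G with D_g ∩ D_{g⁻¹} ≠ {0} and α_g restricting to the identity on D_g ∩ D_{g⁻¹}. -/
/-- A partial action of a group `G` on a (possibly non-unital) ring `A`: a family
of two-sided ideals `D g` and ring isomorphisms `α_g : D g⁻¹ → D g` (encoded as
total maps `act g : A → A` whose behaviour only matters on `D g⁻¹`) satisfying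
the partial action axioms. -/
structure RingPartialAction (G A : Type*) [Group G] [NonUnitalRing A] where
  D : G → TwoSidedIdeal A
  act : G → A → A
  D_one : D 1 = ⊤
  act_one : ∀ x : A, act 1 x = x
  act_mem : ∀ g : G, ∀ x ∈ D g⁻¹, act g x ∈ D g
  act_add : ∀ g : G, ∀ x ∈ D g⁻¹, ∀ y ∈ D g⁻¹, act g (x + y) = act g x + act g y
  act_mul : ∀ g : G, ∀ x ∈ D g⁻¹, ∀ y ∈ D g⁻¹, act g (x * y) = act g x * act g y
  act_inv : ∀ g : G, ∀ x ∈ D g⁻¹, act g⁻¹ (act g x) = x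
  act_image : ∀ g h : G,
    act g '' ((D g⁻¹ : Set A) ∩ (D h : Set A)) = (D g : Set A) ∩ (D (g * h) : Set A)
  act_comp : ∀ g h : G, ∀ x : A,
    x ∈ D h⁻¹ → x ∈ D (g * h)⁻¹ → act g (act h x) = act (g * h) x

namespace RingPartialAction

variable {G A : Type*} [Group G] [NonUnitalRing A] (P : RingPartialAction G A)

/-- An ideal `I` of `A` is `G`-invariant if `α_g (I ∩ D g⁻¹) ⊆ I` for all `g`. -/
def GInvariant (I : TwoSidedIdeal A) : Prop :=
  ∀ g : G, ∀ x ∈ I, x ∈ P.D g⁻¹ → P.act g x ∈ I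

/-- `A` is `G`-simple if its only `G`-invariant ideals are `{0}` and `A`. -/
def GSimple : Prop :=
  ∀ I : TwoSidedIdeal A, P.GInvariant I → I = ⊥ ∨ I = ⊤

/-- The multiplication of the partial skew group ring `A ⋆_α G`, realized on
finitely supported functions `G →₀ A`:
`(a_g δ_g)(b_h δ_h) = α_g (α_{g⁻¹}(a_g) * b_h) δ_{g h}`. -/
noncomputable def skewMul (f h : G →₀ A) : G →₀ A :=
  f.sum fun g a => h.sum fun g' b =>
    Finsupp.single (g * g') (P.act g (P.act g⁻¹ a * b))

/-- The underlying set of the partial skew group ring `A ⋆_α G`: finitely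
supported functions `f : G →₀ A` with `f g ∈ D g` for all `g`. -/
def SkewSet : Set (G →₀ A) := {f | ∀ g : G, f g ∈ P.D g}

/-- A (two-sided) ideal of the partial skew group ring. -/
def IsSkewIdeal (T : Set (G →₀ A)) : Prop :=
  T ⊆ P.SkewSet ∧ (0 : G →₀ A) ∈ T ∧
    (∀ f ∈ T, ∀ h ∈ T, f + h ∈ T) ∧ (∀ f ∈ T, -f ∈ T) ∧
    (∀ f ∈ T, ∀ h ∈ P.SkewSet, P.skewMul f h ∈ T ∧ P.skewMul h f ∈ T)

/-- Simplicity of the partial skew group ring `A ⋆_α G`. -/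
def SkewSimple : Prop :=
  ∀ T : Set (G →₀ A), P.IsSkewIdeal T → T = {0} ∨ T = P.SkewSet

/-- Graded simplicity of `A ⋆_α G` with respect to its natural `G`-grading
`(A ⋆_α G)_g = D_g δ_g`. -/
def SkewGradedSimple : Prop :=
  ∀ T : Set (G →₀ A), P.IsSkewIdeal T →
    (∀ f ∈ T, ∀ g : G, Finsupp.single g (f g) ∈ T) →
    T = {0} ∨ T = P.SkewSet

/-- The partial action is injective: no non-identity `g` is such that
`D g ∩ D g⁻¹` is non-zero and `α_g` restricts to the identity on it. -/
def Injective : Prop :=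
  ∀ g : G, g ≠ 1 →
    (∀ x : A, x ∈ P.D g → x ∈ P.D g⁻¹ → P.act g x = x) →
    ∀ x : A, x ∈ P.D g → x ∈ P.D g⁻¹ → x = 0

/-- `α_g` is inner at an idempotent `u` (viewing `A` as a multiplicative
semigroup): `u ∈ D g⁻¹` and there are `a ∈ u A α_g(u)`, `b ∈ α_g(u) A u` with
`ab = u`, `ba = α_g u` and `α_g x = b * x * a` for all `x ∈ uAu`. -/
def InnerAt (g : G) (u : A) : Prop :=
  u ∈ P.D g⁻¹ ∧ ∃ a b : A,
    (∃ c : A, a = u * c * P.act g u) ∧ (∃ c : A, b = P.act g u * c * u) ∧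
    a * b = u ∧ b * a = P.act g u ∧
    ∀ c : A, P.act g (u * c * u) = b * (u * c * u) * a

/-- The partial action is outer: there is a non-zero idempotent `u ∈ A` such
that `α_g` is outer at `u` for every non-identity `g ∈ G`. -/
def Outer : Prop :=
  ∃ u : A, u ≠ 0 ∧ u * u = u ∧ ∀ g : G, g ≠ 1 → ¬ P.InnerAt g u

end RingPartialAction

/-- A subset `D` of a ring has local units: every finite subset of `D` lies in
`eDe` for an idempotent `e ∈ D`. -/
def HasLocalUnitsOn {A : Type*} [NonUnitalRing A] (D : Set A) : Prop :=
  ∀ s : Finset A, ↑s ⊆ D → ∃ e ∈ D, e * e = e ∧ ∀ x ∈ s, e * x = x ∧ x * e = x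


namespace RingPartialAction

variable {G A : Type*} [Group G] [NonUnitalRing A] (P : RingPartialAction G A)

lemma act_zero (g : G) : P.act g 0 = 0 := by
  have h0 : (0 : A) ∈ P.D g⁻¹ := (P.D g⁻¹).zero_mem
  have h := P.act_add g 0 h0 0 h0
  rw [add_zero] at h
  exact (add_eq_left.mp h.symm)

lemma act_neg (g : G) (x : A) (hx : x ∈ P.D g⁻¹) : P.act g (-x) = - P.act g x := by
  have h := P.act_add g x hx (-x) ((P.D g⁻¹).neg_mem hx)
  rw [add_neg_cancel, P.act_zero] at h
  exact eq_neg_of_add_eq_zero_right h.symm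

lemma mem_image_act (g h : G) (x : A) (h1 : x ∈ P.D g⁻¹) (h2 : x ∈ P.D h) :
    P.act g x ∈ P.D (g * h) := by
  have hmem : P.act g x ∈ P.act g '' ((P.D g⁻¹ : Set A) ∩ (P.D h : Set A)) :=
    ⟨x, ⟨h1, h2⟩, rfl⟩
  rw [P.act_image] at hmem
  exact hmem.2

lemma act_comp' (g h k : G) (x : A) (h1 : x ∈ P.D h⁻¹) (h2 : x ∈ P.D k⁻¹)
    (he : g * h = k) : P.act g (P.act h x) = P.act k x := by
  subst he
  exact P.act_comp g h x h1 h2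

lemma act_act_inv (g : G) (x : A) (hx : x ∈ P.D g) : P.act g (P.act g⁻¹ x) = x := by
  have := P.act_inv g⁻¹ x (by rwa [inv_inv])
  rwa [inv_inv] at this

end RingPartialAction

namespace RingPartialAction

variable {G A : Type*} [Group G] [NonUnitalRing A] (P : RingPartialAction G A)

/-- The invariant carried by the "good pairs" `c δ_s - c δ_{s k⁻¹ g₀ k}`. -/
def PairOK (g₀ : G) (c : A) (s k : G) : Prop :=
  c ∈ P.D s ∧ c ∈ P.D (s * (k⁻¹ * g₀ * k)) ∧
  P.act (s * (k⁻¹ * g₀ * k))⁻¹ c = P.act s⁻¹ c ∧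
  P.act s⁻¹ c ∈ P.D k⁻¹ ∧ P.act s⁻¹ c ∈ P.D (k⁻¹ * g₀) ∧
  P.act s⁻¹ c ∈ P.D (k⁻¹ * g₀⁻¹)

lemma fix_inv {g₀ : G} (hfix : ∀ x : A, x ∈ P.D g₀ → x ∈ P.D g₀⁻¹ → P.act g₀ x = x)
    (w : A) (h1 : w ∈ P.D g₀) (h2 : w ∈ P.D g₀⁻¹) : P.act g₀⁻¹ w = w := by
  have h' := P.act_inv g₀ w h2
  rwa [hfix w h1 h2] at h'

lemma step_right_key {g₀ : G}
    (hfix : ∀ x : A, x ∈ P.D g₀ → x ∈ P.D g₀⁻¹ → P.act g₀ x = x)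
    {c : A} {s k : G} (hp : P.PairOK g₀ c s k) (b : A) :
    P.act (s * (k⁻¹ * g₀ * k)) (P.act (s * (k⁻¹ * g₀ * k))⁻¹ c * b)
      = P.act s (P.act s⁻¹ c * b) := by
  obtain ⟨h1, h2, h3, h4, h5, h6⟩ := hp
  set t := s * (k⁻¹ * g₀ * k) with ht
  set m := P.act s⁻¹ c with hm
  have hm_s : m ∈ P.D s⁻¹ := P.act_mem s⁻¹ c (by rwa [inv_inv])
  have hm_t : m ∈ P.D t⁻¹ := by
    rw [← h3]; exact P.act_mem t⁻¹ c (by rwa [inv_inv])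
  have hx_s : m * b ∈ P.D s⁻¹ := (P.D s⁻¹).mul_mem_right m b hm_s
  have hx_t : m * b ∈ P.D t⁻¹ := (P.D t⁻¹).mul_mem_right m b hm_t
  have hx_k : m * b ∈ P.D k⁻¹ := (P.D k⁻¹).mul_mem_right m b h4
  have hx_kg : m * b ∈ P.D (k⁻¹ * g₀) := (P.D _).mul_mem_right m b h5
  have hx_kg' : m * b ∈ P.D (k⁻¹ * g₀⁻¹) := (P.D _).mul_mem_right m b h6
  have hw_g : P.act k (m * b) ∈ P.D g₀ := by
    have := P.mem_image_act k (k⁻¹ * g₀) (m * b) hx_k hx_kg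
    rwa [show k * (k⁻¹ * g₀) = g₀ by group] at this
  have hw_g' : P.act k (m * b) ∈ P.D g₀⁻¹ := by
    have := P.mem_image_act k (k⁻¹ * g₀⁻¹) (m * b) hx_k hx_kg'
    rwa [show k * (k⁻¹ * g₀⁻¹) = g₀⁻¹ by group] at this
  have hgk : m * b ∈ P.D (g₀ * k)⁻¹ := by rwa [mul_inv_rev]
  have e1 : P.act (s * k⁻¹) (P.act k (m * b)) = P.act s (m * b) :=
    P.act_comp' (s * k⁻¹) k s (m * b) hx_k hx_s (by group)
  have e2 : P.act g₀ (P.act k (m * b)) = P.act (g₀ * k) (m * b) :=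
    P.act_comp' g₀ k (g₀ * k) (m * b) hx_k hgk rfl
  have e3 : P.act (s * k⁻¹) (P.act (g₀ * k) (m * b)) = P.act t (m * b) :=
    P.act_comp' (s * k⁻¹) (g₀ * k) t (m * b) hgk hx_t (by rw [ht]; group)
  have key : P.act t (m * b) = P.act s (m * b) := by
    calc P.act t (m * b) = P.act (s * k⁻¹) (P.act (g₀ * k) (m * b)) := e3.symm
      _ = P.act (s * k⁻¹) (P.act g₀ (P.act k (m * b))) := by rw [e2]
      _ = P.act (s * k⁻¹) (P.act k (m * b)) := by rw [hfix _ hw_g hw_g']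
      _ = P.act s (m * b) := e1
  rw [h3]
  exact key

end RingPartialAction

namespace RingPartialAction

variable {G A : Type*} [Group G] [NonUnitalRing A] (P : RingPartialAction G A)

lemma step_right_pairOK {g₀ : G}
    (hfix : ∀ x : A, x ∈ P.D g₀ → x ∈ P.D g₀⁻¹ → P.act g₀ x = x)
    {c : A} {s k : G} (hp : P.PairOK g₀ c s k) {k' : G} {b : A} (hb : b ∈ P.D k') :
    P.PairOK g₀ (P.act s (P.act s⁻¹ c * b)) (s * k') (k * k') := by
  have key := P.step_right_key hfix hp b
  obtain ⟨h1, h2, h3, h4, h5, h6⟩ := hp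
  set t := s * (k⁻¹ * g₀ * k) with ht
  set m := P.act s⁻¹ c with hm
  set c' := P.act s (m * b) with hc'
  have hm_s : m ∈ P.D s⁻¹ := P.act_mem s⁻¹ c (by rwa [inv_inv])
  have hm_t : m ∈ P.D t⁻¹ := by
    rw [← h3]; exact P.act_mem t⁻¹ c (by rwa [inv_inv])
  have hx_s : m * b ∈ P.D s⁻¹ := (P.D s⁻¹).mul_mem_right m b hm_s
  have hx_t : m * b ∈ P.D t⁻¹ := (P.D t⁻¹).mul_mem_right m b hm_t
  have hx_k : m * b ∈ P.D k⁻¹ := (P.D k⁻¹).mul_mem_right m b h4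
  have hx_kg : m * b ∈ P.D (k⁻¹ * g₀) := (P.D _).mul_mem_right m b h5
  have hx_kg' : m * b ∈ P.D (k⁻¹ * g₀⁻¹) := (P.D _).mul_mem_right m b h6
  have hx_k' : m * b ∈ P.D k' := (P.D k').mul_mem_left m b hb
  have hc't : c' = P.act t (m * b) := by rw [← key, h3]
  have htk' : t * k' = (s * k') * ((k * k')⁻¹ * g₀ * (k * k')) := by rw [ht]; group
  refine ⟨?_, ?_, ?_, ?_, ?_, ?_⟩
  · exact P.mem_image_act s k' (m * b) hx_s hx_k'
  · have := P.mem_image_act t k' (m * b) hx_t hx_k'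
    rw [hc't]; rwa [htk'] at this
  · have e_s : P.act (s * k')⁻¹ c' = P.act k'⁻¹ (m * b) :=
      P.act_comp' ((s * k')⁻¹) s (k'⁻¹) (m * b) hx_s (by rwa [inv_inv]) (by group)
    have e_t : P.act ((s * k') * ((k * k')⁻¹ * g₀ * (k * k')))⁻¹ c' = P.act k'⁻¹ (m * b) := by
      rw [hc't, ← htk']
      exact P.act_comp' ((t * k')⁻¹) t (k'⁻¹) (m * b) hx_t (by rwa [inv_inv]) (by group)
    exact e_t.trans e_s.symm
  · have e_s : P.act (s * k')⁻¹ c' = P.act k'⁻¹ (m * b) :=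
      P.act_comp' ((s * k')⁻¹) s (k'⁻¹) (m * b) hx_s (by rwa [inv_inv]) (by group)
    rw [e_s]
    have := P.mem_image_act k'⁻¹ k⁻¹ (m * b) (by rwa [inv_inv]) hx_k
    rwa [show k'⁻¹ * k⁻¹ = (k * k')⁻¹ by group] at this
  · have e_s : P.act (s * k')⁻¹ c' = P.act k'⁻¹ (m * b) :=
      P.act_comp' ((s * k')⁻¹) s (k'⁻¹) (m * b) hx_s (by rwa [inv_inv]) (by group)
    rw [e_s]
    have := P.mem_image_act k'⁻¹ (k⁻¹ * g₀) (m * b) (by rwa [inv_inv]) hx_kg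
    rwa [show k'⁻¹ * (k⁻¹ * g₀) = (k * k')⁻¹ * g₀ by group] at this
  · have e_s : P.act (s * k')⁻¹ c' = P.act k'⁻¹ (m * b) :=
      P.act_comp' ((s * k')⁻¹) s (k'⁻¹) (m * b) hx_s (by rwa [inv_inv]) (by group)
    rw [e_s]
    have := P.mem_image_act k'⁻¹ (k⁻¹ * g₀⁻¹) (m * b) (by rwa [inv_inv]) hx_kg'
    rwa [show k'⁻¹ * (k⁻¹ * g₀⁻¹) = (k * k')⁻¹ * g₀⁻¹ by group] at this

lemma step_left_pairOK {g₀ : G}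
    (hfix : ∀ x : A, x ∈ P.D g₀ → x ∈ P.D g₀⁻¹ → P.act g₀ x = x)
    {c : A} {s k : G} (hp : P.PairOK g₀ c s k) {h : G} {a : A} (ha : a ∈ P.D h) :
    P.PairOK g₀ (P.act h (P.act h⁻¹ a * c)) (h * s) k := by
  obtain ⟨h1, h2, h3, h4, h5, h6⟩ := hp
  set t := s * (k⁻¹ * g₀ * k) with ht
  set m := P.act s⁻¹ c with hm
  have hm_s : m ∈ P.D s⁻¹ := P.act_mem s⁻¹ c (by rwa [inv_inv])
  have hd : P.act h⁻¹ a ∈ P.D h⁻¹ := P.act_mem h⁻¹ a (by rwa [inv_inv])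
  set y := P.act h⁻¹ a * c with hy
  have hy_h : y ∈ P.D h⁻¹ := (P.D h⁻¹).mul_mem_right _ c hd
  have hy_s : y ∈ P.D s := (P.D s).mul_mem_left _ c h1
  have hy_t : y ∈ P.D t := (P.D t).mul_mem_left _ c h2
  have hc : P.act s m = c := P.act_act_inv s c h1
  have hc_q : ∀ q : G, m ∈ P.D q → c ∈ P.D (s * q) := fun q hq => by
    rw [← hc]; exact P.mem_image_act s q m hm_s hq
  have hy_sq : ∀ q : G, m ∈ P.D q → y ∈ P.D (s * q) := fun q hq =>
    (P.D (s * q)).mul_mem_left _ c (hc_q q hq)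
  set m'' := P.act s⁻¹ y with hm''
  have hm''_q : ∀ q : G, m ∈ P.D q → m'' ∈ P.D q := fun q hq => by
    have := P.mem_image_act s⁻¹ (s * q) y (by rwa [inv_inv]) (hy_sq q hq)
    rwa [show s⁻¹ * (s * q) = q by group] at this
  have hm''_kgk : m'' ∈ P.D (k⁻¹ * g₀ * k) := by
    have := P.mem_image_act s⁻¹ (s * (k⁻¹ * g₀ * k)) y (by rwa [inv_inv]) hy_t
    rwa [show s⁻¹ * (s * (k⁻¹ * g₀ * k)) = k⁻¹ * g₀ * k by group] at this
  have hm''_k : m'' ∈ P.D k⁻¹ := hm''_q k⁻¹ h4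
  have hm''_kg : m'' ∈ P.D (k⁻¹ * g₀) := hm''_q (k⁻¹ * g₀) h5
  have hm''_kg' : m'' ∈ P.D (k⁻¹ * g₀⁻¹) := hm''_q (k⁻¹ * g₀⁻¹) h6
  have hw''_g : P.act k m'' ∈ P.D g₀ := by
    have := P.mem_image_act k (k⁻¹ * g₀) m'' hm''_k hm''_kg
    rwa [show k * (k⁻¹ * g₀) = g₀ by group] at this
  have hw''_g' : P.act k m'' ∈ P.D g₀⁻¹ := by
    have := P.mem_image_act k (k⁻¹ * g₀⁻¹) m'' hm''_k hm''_kg'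
    rwa [show k * (k⁻¹ * g₀⁻¹) = g₀⁻¹ by group] at this
  have hw''_gk : P.act k m'' ∈ P.D (g₀ * k) := by
    have := P.mem_image_act k (k⁻¹ * g₀ * k) m'' hm''_k hm''_kgk
    rwa [show k * (k⁻¹ * g₀ * k) = g₀ * k by group] at this
  have e_s : P.act (h * s)⁻¹ (P.act h y) = m'' :=
    P.act_comp' ((h * s)⁻¹) h s⁻¹ y hy_h (by rwa [inv_inv]) (by group)
  have claim : P.act t⁻¹ y = m'' := by
    have e_a : P.act (k⁻¹ * g₀⁻¹ * k) (P.act s⁻¹ y) = P.act t⁻¹ y :=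
      P.act_comp' (k⁻¹ * g₀⁻¹ * k) s⁻¹ t⁻¹ y (by rwa [inv_inv]) (by rwa [inv_inv])
        (by rw [ht]; group)
    have e_b : P.act (k⁻¹ * g₀⁻¹) (P.act k m'') = P.act (k⁻¹ * g₀⁻¹ * k) m'' :=
      P.act_comp' (k⁻¹ * g₀⁻¹) k (k⁻¹ * g₀⁻¹ * k) m'' hm''_k
        (by rw [show (k⁻¹ * g₀⁻¹ * k)⁻¹ = k⁻¹ * g₀ * k by group]; exact hm''_kgk) rfl
    have e_c : P.act k⁻¹ (P.act g₀⁻¹ (P.act k m'')) = P.act (k⁻¹ * g₀⁻¹) (P.act k m'') :=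
      P.act_comp' k⁻¹ g₀⁻¹ (k⁻¹ * g₀⁻¹) (P.act k m'') (by rwa [inv_inv])
        (by rw [show (k⁻¹ * g₀⁻¹)⁻¹ = g₀ * k by group]; exact hw''_gk) rfl
    calc P.act t⁻¹ y = P.act (k⁻¹ * g₀⁻¹ * k) m'' := e_a.symm
      _ = P.act (k⁻¹ * g₀⁻¹) (P.act k m'') := e_b.symm
      _ = P.act k⁻¹ (P.act g₀⁻¹ (P.act k m'')) := e_c.symm
      _ = P.act k⁻¹ (P.act k m'') := by rw [P.fix_inv hfix _ hw''_g hw''_g']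
      _ = m'' := P.act_inv k m'' hm''_k
  have e_t : P.act ((h * s) * (k⁻¹ * g₀ * k))⁻¹ (P.act h y) = P.act t⁻¹ y :=
    P.act_comp' (((h * s) * (k⁻¹ * g₀ * k))⁻¹) h t⁻¹ y hy_h (by rwa [inv_inv])
      (by rw [ht]; group)
  refine ⟨?_, ?_, ?_, ?_, ?_, ?_⟩
  · exact P.mem_image_act h s y hy_h hy_s
  · have := P.mem_image_act h t y hy_h hy_t
    rwa [show h * t = (h * s) * (k⁻¹ * g₀ * k) by rw [ht]; group] at this
  · exact e_t.trans (claim.trans e_s.symm)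
  · rw [e_s]; exact hm''_k
  · rw [e_s]; exact hm''_kg
  · rw [e_s]; exact hm''_kg'

end RingPartialAction

namespace RingPartialAction

variable {G A : Type*} [Group G] [NonUnitalRing A] (P : RingPartialAction G A)

lemma skewMul_zero_left (hh : G →₀ A) : P.skewMul 0 hh = 0 :=
  Finsupp.sum_zero_index

lemma skewMul_zero_right (f : G →₀ A) : P.skewMul f 0 = 0 := by
  simp only [skewMul, Finsupp.sum_zero_index, Finsupp.sum, Finsupp.support_zero, Finset.sum_empty,
    Finset.sum_const_zero]

lemma skewMul_single_single (s k : G) (c b : A) :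
    P.skewMul (Finsupp.single s c) (Finsupp.single k b)
      = Finsupp.single (s * k) (P.act s (P.act s⁻¹ c * b)) := by
  simp only [skewMul]
  have h0 : ((Finsupp.single k b).sum fun g' b' =>
      Finsupp.single (s * g') (P.act s (P.act s⁻¹ (0 : A) * b'))) = 0 := by
    simp [P.act_zero]
  rw [Finsupp.sum_single_index h0, Finsupp.sum_single_index (by simp [P.act_zero])]

lemma skewMul_add_right (f h₁ h₂ : G →₀ A) (hf : ∀ g' : G, f g' ∈ P.D g') :
    P.skewMul f (h₁ + h₂) = P.skewMul f h₁ + P.skewMul f h₂ := by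
  simp only [skewMul]
  rw [← Finsupp.sum_add]
  refine Finsupp.sum_congr fun g' _ => ?_
  have hy : P.act g'⁻¹ (f g') ∈ P.D g'⁻¹ :=
    P.act_mem g'⁻¹ (f g') (by rw [inv_inv]; exact hf g')
  refine Finsupp.sum_add_index' (fun a => ?_) (fun a b₁ b₂ => ?_)
  · simp [P.act_zero]
  · rw [mul_add, P.act_add g' _ ((P.D g'⁻¹).mul_mem_right _ _ hy) _
      ((P.D g'⁻¹).mul_mem_right _ _ hy), Finsupp.single_add]

lemma skewMul_neg_right (f hh : G →₀ A) (hf : ∀ g' : G, f g' ∈ P.D g') :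
    P.skewMul f (-hh) = - P.skewMul f hh := by
  simp only [skewMul]
  rw [← Finsupp.sum_neg]
  refine Finsupp.sum_congr fun g' _ => ?_
  have hy : P.act g'⁻¹ (f g') ∈ P.D g'⁻¹ :=
    P.act_mem g'⁻¹ (f g') (by rw [inv_inv]; exact hf g')
  rw [Finsupp.sum, Finsupp.sum, Finsupp.support_neg, ← Finset.sum_neg_distrib]
  refine Finset.sum_congr rfl fun x _ => ?_
  rw [Finsupp.neg_apply, mul_neg, P.act_neg g' _ ((P.D g'⁻¹).mul_mem_right _ _ hy),
    Finsupp.single_neg]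

lemma skewMul_add_left (f₁ f₂ hh : G →₀ A) (h1 : ∀ g' : G, f₁ g' ∈ P.D g')
    (h2 : ∀ g' : G, f₂ g' ∈ P.D g') :
    P.skewMul (f₁ + f₂) hh = P.skewMul f₁ hh + P.skewMul f₂ hh := by
  classical
  simp only [skewMul]
  have hF0 : ∀ x : G,
      (hh.sum fun g' b => Finsupp.single (x * g') (P.act x (P.act x⁻¹ (0 : A) * b))) = 0 := by
    intro x; simp [P.act_zero]
  rw [Finsupp.sum_of_support_subset (f₁ + f₂) Finsupp.support_add _ (fun i _ => hF0 i),
      Finsupp.sum_of_support_subset f₁ Finset.subset_union_left _ (fun i _ => hF0 i),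
      Finsupp.sum_of_support_subset f₂ Finset.subset_union_right _ (fun i _ => hF0 i),
      ← Finset.sum_add_distrib]
  refine Finset.sum_congr rfl fun x _ => ?_
  have ha1 : P.act x⁻¹ (f₁ x) ∈ P.D x⁻¹ := P.act_mem x⁻¹ _ (by rw [inv_inv]; exact h1 x)
  have ha2 : P.act x⁻¹ (f₂ x) ∈ P.D x⁻¹ := P.act_mem x⁻¹ _ (by rw [inv_inv]; exact h2 x)
  rw [Finsupp.add_apply,
    P.act_add x⁻¹ _ (by rw [inv_inv]; exact h1 x) _ (by rw [inv_inv]; exact h2 x),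
    ← Finsupp.sum_add]
  refine Finsupp.sum_congr fun g' _ => ?_
  rw [add_mul, P.act_add x _ ((P.D x⁻¹).mul_mem_right _ _ ha1) _
    ((P.D x⁻¹).mul_mem_right _ _ ha2), Finsupp.single_add]

lemma skewMul_neg_left (f hh : G →₀ A) (hf : ∀ g' : G, f g' ∈ P.D g') :
    P.skewMul (-f) hh = - P.skewMul f hh := by
  simp only [skewMul]
  rw [Finsupp.sum, Finsupp.sum, Finsupp.support_neg, ← Finset.sum_neg_distrib]
  refine Finset.sum_congr rfl fun x _ => ?_
  have ha : P.act x⁻¹ (f x) ∈ P.D x⁻¹ := P.act_mem x⁻¹ _ (by rw [inv_inv]; exact hf x)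
  rw [Finsupp.neg_apply, P.act_neg x⁻¹ _ (by rw [inv_inv]; exact hf x), ← Finsupp.sum_neg]
  refine Finsupp.sum_congr fun g' _ => ?_
  rw [neg_mul, P.act_neg x _ ((P.D x⁻¹).mul_mem_right _ _ ha), Finsupp.single_neg]

end RingPartialAction

namespace RingPartialAction

variable {G A : Type*} [Group G] [NonUnitalRing A] (P : RingPartialAction G A)

/-- The generating set of differences `c δ_s - c δ_{s k⁻¹ g₀ k}`. -/
def goodSet (g₀ : G) : Set (G →₀ A) :=
  { f | ∃ c s k, P.PairOK g₀ c s k ∧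
      f = Finsupp.single s c - Finsupp.single (s * (k⁻¹ * g₀ * k)) c }

/-- `SkewSet` as an additive subgroup. -/
def skewSubgroup : AddSubgroup (G →₀ A) where
  carrier := P.SkewSet
  add_mem' := fun {a b} ha hb g => by
    rw [Finsupp.add_apply]; exact (P.D g).add_mem (ha g) (hb g)
  zero_mem' := fun g => by rw [Finsupp.zero_apply]; exact (P.D g).zero_mem
  neg_mem' := fun {a} ha g => by rw [Finsupp.neg_apply]; exact (P.D g).neg_mem (ha g)

lemma single_mem_skewSet {s : G} {c : A} (hc : c ∈ P.D s) :
    Finsupp.single s c ∈ P.SkewSet := fun g => by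
  rcases eq_or_ne s g with rfl | hne
  · rwa [Finsupp.single_eq_same]
  · rw [Finsupp.single_eq_of_ne' hne]; exact (P.D g).zero_mem

lemma goodSet_subset_skew (g₀ : G) : P.goodSet g₀ ⊆ P.SkewSet := by
  rintro f ⟨c, s, k, hp, rfl⟩ g
  rw [Finsupp.sub_apply, sub_eq_add_neg]
  exact (P.D g).add_mem (P.single_mem_skewSet hp.1 g)
    ((P.D g).neg_mem (P.single_mem_skewSet hp.2.1 g))

lemma closure_le_skew (g₀ : G) :
    AddSubgroup.closure (P.goodSet g₀) ≤ P.skewSubgroup :=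
  (AddSubgroup.closure_le P.skewSubgroup).mpr (P.goodSet_subset_skew g₀)

lemma mul_single_right_mem {g₀ : G}
    (hfix : ∀ x : A, x ∈ P.D g₀ → x ∈ P.D g₀⁻¹ → P.act g₀ x = x)
    (k' : G) (b : A) (hb : b ∈ P.D k') (f : G →₀ A)
    (hf : f ∈ AddSubgroup.closure (P.goodSet g₀)) :
    P.skewMul f (Finsupp.single k' b) ∈ AddSubgroup.closure (P.goodSet g₀) := by
  induction hf using AddSubgroup.closure_induction with
  | mem f hfm =>
    obtain ⟨c, s, k, hp, rfl⟩ := hfm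
    set t := s * (k⁻¹ * g₀ * k) with ht
    have hz : P.act t⁻¹ c * b ∈ P.D t⁻¹ :=
      (P.D t⁻¹).mul_mem_right _ b (P.act_mem t⁻¹ c (by rw [inv_inv]; exact hp.2.1))
    have hdecomp : Finsupp.single s c - Finsupp.single t c
        = Finsupp.single s c + Finsupp.single t (-c) := by
      rw [Finsupp.single_neg, sub_eq_add_neg]
    have hcalc : P.skewMul (Finsupp.single s c - Finsupp.single t c) (Finsupp.single k' b)
        = Finsupp.single (s * k') (P.act s (P.act s⁻¹ c * b))
          - Finsupp.single (t * k') (P.act t (P.act t⁻¹ c * b)) := by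
      rw [hdecomp, P.skewMul_add_left _ _ _ (P.single_mem_skewSet hp.1)
        (P.single_mem_skewSet ((P.D t).neg_mem hp.2.1)),
        P.skewMul_single_single, P.skewMul_single_single,
        P.act_neg t⁻¹ c (by rw [inv_inv]; exact hp.2.1), neg_mul,
        P.act_neg t _ hz, Finsupp.single_neg, sub_eq_add_neg]
    rw [hcalc, P.step_right_key hfix hp b]
    apply AddSubgroup.subset_closure
    exact ⟨P.act s (P.act s⁻¹ c * b), s * k', k * k', P.step_right_pairOK hfix hp hb,
      by rw [show (s * k') * ((k * k')⁻¹ * g₀ * (k * k')) = t * k' by rw [ht]; group]⟩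
  | zero => rw [P.skewMul_zero_left]; exact zero_mem _
  | add f₁ f₂ hf₁ hf₂ ih₁ ih₂ =>
    rw [P.skewMul_add_left f₁ f₂ _ (P.closure_le_skew g₀ hf₁) (P.closure_le_skew g₀ hf₂)]
    exact add_mem ih₁ ih₂
  | neg f₁ hf₁ ih =>
    rw [P.skewMul_neg_left f₁ _ (P.closure_le_skew g₀ hf₁)]
    exact neg_mem ih

lemma mul_single_left_mem {g₀ : G}
    (hfix : ∀ x : A, x ∈ P.D g₀ → x ∈ P.D g₀⁻¹ → P.act g₀ x = x)
    (h : G) (a : A) (ha : a ∈ P.D h) (f : G →₀ A)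
    (hf : f ∈ AddSubgroup.closure (P.goodSet g₀)) :
    P.skewMul (Finsupp.single h a) f ∈ AddSubgroup.closure (P.goodSet g₀) := by
  induction hf using AddSubgroup.closure_induction with
  | mem f hfm =>
    obtain ⟨c, s, k, hp, rfl⟩ := hfm
    set t := s * (k⁻¹ * g₀ * k) with ht
    have hy : P.act h⁻¹ a * c ∈ P.D h⁻¹ :=
      (P.D h⁻¹).mul_mem_right _ c (P.act_mem h⁻¹ a (by rw [inv_inv]; exact ha))
    have hdecomp : Finsupp.single s c - Finsupp.single t c
        = Finsupp.single s c + Finsupp.single t (-c) := by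
      rw [Finsupp.single_neg, sub_eq_add_neg]
    have hcalc : P.skewMul (Finsupp.single h a) (Finsupp.single s c - Finsupp.single t c)
        = Finsupp.single (h * s) (P.act h (P.act h⁻¹ a * c))
          - Finsupp.single (h * t) (P.act h (P.act h⁻¹ a * c)) := by
      rw [hdecomp, P.skewMul_add_right _ _ _ (P.single_mem_skewSet ha),
        P.skewMul_single_single, P.skewMul_single_single, mul_neg,
        P.act_neg h _ hy, Finsupp.single_neg, sub_eq_add_neg]
    rw [hcalc]
    apply AddSubgroup.subset_closure
    exact ⟨P.act h (P.act h⁻¹ a * c), h * s, k, P.step_left_pairOK hfix hp ha,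
      by rw [show (h * s) * (k⁻¹ * g₀ * k) = h * t by rw [ht]; group]⟩
  | zero => rw [P.skewMul_zero_right]; exact zero_mem _
  | add f₁ f₂ hf₁ hf₂ ih₁ ih₂ =>
    rw [P.skewMul_add_right _ f₁ f₂ (P.single_mem_skewSet ha)]
    exact add_mem ih₁ ih₂
  | neg f₁ hf₁ ih =>
    rw [P.skewMul_neg_right _ f₁ (P.single_mem_skewSet ha)]
    exact neg_mem ih

end RingPartialAction

namespace RingPartialAction

variable {G A : Type*} [Group G] [NonUnitalRing A] (P : RingPartialAction G A)

lemma mul_right_mem {g₀ : G}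
    (hfix : ∀ x : A, x ∈ P.D g₀ → x ∈ P.D g₀⁻¹ → P.act g₀ x = x)
    (f : G →₀ A) (hf : f ∈ AddSubgroup.closure (P.goodSet g₀))
    (hh : G →₀ A) (hhh : hh ∈ P.SkewSet) :
    P.skewMul f hh ∈ AddSubgroup.closure (P.goodSet g₀) := by
  revert hhh
  induction hh using Finsupp.induction with
  | zero => intro _; rw [P.skewMul_zero_right]; exact zero_mem _
  | single_add k b hh' hk hb ih =>
    intro hcond
    have hb' : b ∈ P.D k := by
      have h := hcond k
      rwa [Finsupp.add_apply, Finsupp.single_eq_same, Finsupp.notMem_support_iff.mp hk,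
        add_zero] at h
    have hcond' : hh' ∈ P.SkewSet := by
      intro g'
      rcases eq_or_ne g' k with rfl | hne
      · rw [Finsupp.notMem_support_iff.mp hk]; exact (P.D _).zero_mem
      · have h := hcond g'
        rwa [Finsupp.add_apply, Finsupp.single_eq_of_ne' (Ne.symm hne), zero_add] at h
    rw [P.skewMul_add_right f _ _ (P.closure_le_skew g₀ hf)]
    exact add_mem (P.mul_single_right_mem hfix k b hb' f hf) (ih hcond')

lemma mul_left_mem {g₀ : G}
    (hfix : ∀ x : A, x ∈ P.D g₀ → x ∈ P.D g₀⁻¹ → P.act g₀ x = x)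
    (f : G →₀ A) (hf : f ∈ AddSubgroup.closure (P.goodSet g₀))
    (hh : G →₀ A) (hhh : hh ∈ P.SkewSet) :
    P.skewMul hh f ∈ AddSubgroup.closure (P.goodSet g₀) := by
  revert hhh
  induction hh using Finsupp.induction with
  | zero => intro _; rw [P.skewMul_zero_left]; exact zero_mem _
  | single_add k b hh' hk hb ih =>
    intro hcond
    have hb' : b ∈ P.D k := by
      have h := hcond k
      rwa [Finsupp.add_apply, Finsupp.single_eq_same, Finsupp.notMem_support_iff.mp hk,
        add_zero] at h
    have hcond' : hh' ∈ P.SkewSet := by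
      intro g'
      rcases eq_or_ne g' k with rfl | hne
      · rw [Finsupp.notMem_support_iff.mp hk]; exact (P.D _).zero_mem
      · have h := hcond g'
        rwa [Finsupp.add_apply, Finsupp.single_eq_of_ne' (Ne.symm hne), zero_add] at h
    rw [P.skewMul_add_left _ hh' f (P.single_mem_skewSet hb') hcond']
    exact add_mem (P.mul_single_left_mem hfix k b hb' f hf) (ih hcond')

/-- The sum-of-coefficients additive homomorphism. -/
def coeffSum : (G →₀ A) →+ A where
  toFun f := f.sum fun _ a => a
  map_zero' := Finsupp.sum_zero_index
  map_add' f h := by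
    exact Finsupp.sum_add_index' (fun _ => rfl) (fun _ _ _ => rfl)

lemma coeffSum_single (s : G) (c : A) : (coeffSum : (G →₀ A) →+ A) (Finsupp.single s c) = c := by
  show (Finsupp.single s c).sum (fun _ a => a) = c
  exact Finsupp.sum_single_index rfl

end RingPartialAction

/-- if the partial skew group ring `A ⋆_α G` is simple, then the
partial action `α` is injective. -/
theorem stmt8 {G A : Type*} [Group G] [NonUnitalRing A]
    (P : RingPartialAction G A) (hsimple : P.SkewSimple) :
    P.Injective := by
  intro g₀ hg₀ hfix x hx hx'
  classical
  set T := AddSubgroup.closure (P.goodSet g₀) with hT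
  have hideal : P.IsSkewIdeal (↑T : Set (G →₀ A)) := by
    refine ⟨fun f hf => P.closure_le_skew g₀ hf, zero_mem T,
      fun f hf h hh => add_mem hf hh, fun f hf => neg_mem hf,
      fun f hf h hh => ⟨P.mul_right_mem hfix f hf h hh, P.mul_left_mem hfix f hf h hh⟩⟩
  have hpair : P.PairOK g₀ x 1 1 := by
    refine ⟨?_, ?_, ?_, ?_, ?_, ?_⟩
    · rw [P.D_one]; trivial
    · rw [show (1 : G) * ((1 : G)⁻¹ * g₀ * 1) = g₀ by group]; exact hx
    · rw [show (1 : G) * ((1 : G)⁻¹ * g₀ * 1) = g₀ by group, inv_one, P.act_one,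
        P.fix_inv hfix x hx hx']
    · rw [inv_one, P.act_one, P.D_one]; trivial
    · rw [inv_one, P.act_one, one_mul]; exact hx
    · rw [inv_one, P.act_one, one_mul]; exact hx'
  have hbase : Finsupp.single 1 x - Finsupp.single g₀ x ∈ P.goodSet g₀ := by
    refine ⟨x, 1, 1, hpair, ?_⟩
    rw [show (1 : G) * ((1 : G)⁻¹ * g₀ * 1) = g₀ by group]
  rcases hsimple (↑T : Set (G →₀ A)) hideal with h0 | hS
  · have hw : Finsupp.single 1 x - Finsupp.single g₀ x ∈ (↑T : Set (G →₀ A)) :=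
      AddSubgroup.subset_closure hbase
    rw [h0] at hw
    have hw0 : Finsupp.single 1 x - Finsupp.single g₀ x = 0 := hw
    have h1 := congrArg (fun f : G →₀ A => f 1) hw0
    simp only [Finsupp.sub_apply, Finsupp.single_eq_same, Finsupp.zero_apply] at h1
    rwa [Finsupp.single_eq_of_ne' hg₀, sub_zero] at h1
  · have hker : T ≤ (RingPartialAction.coeffSum : (G →₀ A) →+ A).ker := by
      refine (AddSubgroup.closure_le _).mpr ?_
      rintro f ⟨c, s, k, hp, rfl⟩
      rw [SetLike.mem_coe, AddMonoidHom.mem_ker, map_sub,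
        RingPartialAction.coeffSum_single, RingPartialAction.coeffSum_single, sub_self]
    have hx1 : Finsupp.single 1 x ∈ (↑T : Set (G →₀ A)) := by
      rw [hS]
      exact P.single_mem_skewSet (by rw [P.D_one]; trivial)
    have := hker hx1
    rw [AddMonoidHom.mem_ker, RingPartialAction.coeffSum_single] at this
    exact this
end

section
/- Let α be a partial action of a group G on a ring A with globalization β on a ring B (so A is an ideal of B, D_g = A ∩ β_g(A), and α_g = β_g|_{D_{g⁻¹}}). If u is a non-zero idempotent of A, then for each g ∈ G, the map α_g is inner at u if and only if β_g is inner at u. -/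
/-- let `β` be a global action of `G` on a ring `B`, `A` an ideal
of `B`, and `α` the restricted partial action on `A` (with `D g = A ∩ β_g(A)`
and `α_g = β_g|_{D g⁻¹}`).  If `u` is a non-zero idempotent of `A`, then for
each `g ∈ G` the map `α_g` is inner at `u` if and only if `β_g` is inner at
`u`. -/
theorem stmt11 {G B : Type*} [Group G] [NonUnitalRing B]
    (β : G → B ≃+* B) (hβ1 : ∀ x : B, β 1 x = x)
    (hβmul : ∀ g h : G, ∀ x : B, β (g * h) x = β g (β h x))
    (A : TwoSidedIdeal B)
    (u : B) (huA : u ∈ A) (hu0 : u ≠ 0) (huid : u * u = u) (g : G) :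
    -- `α_g` is inner at `u`: `u ∈ D g⁻¹ = A ∩ β_{g⁻¹}(A)`, and there are
    -- `a ∈ u A α_g(u)`, `b ∈ α_g(u) A u` with `ab = u`, `ba = α_g u` and
    -- `α_g x = b x a` on `uAu`
    ((u ∈ A ∧ ∃ y ∈ A, u = β g⁻¹ y) ∧ ∃ a b : B,
        (∃ c ∈ A, a = u * c * β g u) ∧ (∃ c ∈ A, b = β g u * c * u) ∧
        a * b = u ∧ b * a = β g u ∧
        ∀ c ∈ A, β g (u * c * u) = b * (u * c * u) * a) ↔
    -- `β_g` is inner at `u` (in the multiplicative semigroup of `B`)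
    (∃ a b : B, (∃ c : B, a = u * c * β g u) ∧ (∃ c : B, b = β g u * c * u) ∧
        a * b = u ∧ b * a = β g u ∧
        ∀ c : B, β g (u * c * u) = b * (u * c * u) * a) := by
  have hβu : β g u * β g u = β g u := by rw [← map_mul, huid]
  constructor
  · rintro ⟨-, a, b, ⟨c, hc, ha⟩, ⟨d, hd, hb⟩, hab, hba, hcomm⟩
    refine ⟨a, b, ⟨c, ha⟩, ⟨d, hb⟩, hab, hba, fun x => ?_⟩
    have hx : u * x * u ∈ A := A.mul_mem_right _ _ (A.mul_mem_right _ _ huA)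
    have key := hcomm _ hx
    have h1 : u * (u * x * u) * u = u * x * u := by
      rw [show u * (u * x * u) * u = (u * u) * x * (u * u) by noncomm_ring, huid]
    rwa [h1] at key
  · rintro ⟨a, b, ⟨c, ha⟩, ⟨d, hb⟩, hab, hba, hcomm⟩
    have hβgA : β g u ∈ A := by
      rw [← hba, ha, hb]
      exact A.mul_mem_left _ _ (A.mul_mem_right _ _ (A.mul_mem_right _ _ huA))
    refine ⟨⟨huA, β g u, hβgA, by rw [← hβmul, inv_mul_cancel, hβ1]⟩,
      a, b, ⟨u * c * β g u, A.mul_mem_right _ _ (A.mul_mem_right _ _ huA), ?_⟩,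
      ⟨β g u * d * u, A.mul_mem_left _ _ huA, ?_⟩,
      hab, hba, fun x _ => hcomm x⟩
    · rw [ha, show u * (u * c * β g u) * β g u = (u * u) * c * (β g u * β g u) by
        noncomm_ring, huid, hβu]
    · rw [hb, show β g u * (β g u * d * u) * u = (β g u * β g u) * d * (u * u) by
        noncomm_ring, huid, hβu]
end

section
/- If α is a partial action of a group G on a ring A with globalization β on a unital ring B, and α is outer (at some non-zero idempotent u ∈ A), then β is outer in the classical sense: the identity element e is the only g ∈ G for which β_g is an inner automorphism of B (i.e., of the form x ↦ c⁻¹xc for an invertible c ∈ B). -/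
/-- let `β` be a global action of `G` on a unital ring `B`, `A` an
ideal of `B`, and `α` the restricted partial action on `A`.  If `α` is outer
(at some non-zero idempotent `u ∈ A`), then `β` is outer in the classical
sense: `e` is the only element of `G` for which `β_g` is an inner automorphism
`x ↦ c⁻¹ x c` with `c` invertible. -/
theorem stmt12 {G B : Type*} [Group G] [Ring B]
    (β : G → B ≃+* B) (hβ1 : ∀ x : B, β 1 x = x)
    (hβmul : ∀ g h : G, ∀ x : B, β (g * h) x = β g (β h x))
    (A : TwoSidedIdeal B)
    (houter : ∃ u : B, u ∈ A ∧ u ≠ 0 ∧ u * u = u ∧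
      ∀ g : G, g ≠ 1 →
        ¬((u ∈ A ∧ ∃ y ∈ A, u = β g⁻¹ y) ∧ ∃ a b : B,
            (∃ c ∈ A, a = u * c * β g u) ∧ (∃ c ∈ A, b = β g u * c * u) ∧
            a * b = u ∧ b * a = β g u ∧
            ∀ c ∈ A, β g (u * c * u) = b * (u * c * u) * a))
    (g : G) (c : Bˣ) (hc : ∀ x : B, β g x = ↑c⁻¹ * x * ↑c) :
    g = 1 := by
  by_contra hg
  obtain ⟨u, huA, hu0, huu, h⟩ := houter
  apply h g hg
  have hgu : β g u = ↑c⁻¹ * u * ↑c := hc u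
  have hguA : (β g u : B) ∈ A := by
    rw [hgu]; exact A.mul_mem_right _ _ (A.mul_mem_left _ _ huA)
  have hguu : β g u * β g u = β g u := by rw [← map_mul, huu]
  have huu' : ∀ x : B, u * (u * x) = u * x := fun x => by rw [← mul_assoc, huu]
  have hguu' : ∀ x : B, β g u * (β g u * x) = β g u * x := fun x => by
    rw [← mul_assoc, hguu]
  refine ⟨⟨huA, β g u, hguA, ?_⟩, u * ↑c, ↑c⁻¹ * u,
    ⟨↑c * β g u, A.mul_mem_left _ _ hguA, ?_⟩,
    ⟨β g u * ↑c⁻¹, A.mul_mem_right _ _ hguA, ?_⟩, ?_, ?_, ?_⟩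
  · rw [← hβmul, inv_mul_cancel, hβ1]
  · simp [hgu, mul_assoc, huu', hguu', huu, Units.inv_mul_cancel_left,
      Units.mul_inv_cancel_left]
  · simp [hgu, mul_assoc, huu', hguu', huu, Units.inv_mul_cancel_left,
      Units.mul_inv_cancel_left]
  · simp [mul_assoc, huu', huu, Units.mul_inv_cancel_left]
  · simp [hgu, mul_assoc, huu', huu, Units.inv_mul_cancel_left]
  · intro x hx
    rw [hc]
    simp [mul_assoc, huu', huu]
end

section
/- Let α be a partial action of an abelian group G on a set X which is faithful and minimal. Then α is free: for every non-identity g ∈ G and every x ∈ X_{g⁻¹}, α_g(x) ≠ x. -/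
/-- A partial action of a group `G` on a set `X`: subsets `Xs g ⊆ X` and
bijections `α_g : Xs g⁻¹ → Xs g` (encoded as total maps `act g : X → X` whose
behaviour only matters on `Xs g⁻¹`) satisfying the partial action axioms. -/
structure SetPartialAction (G X : Type*) [Group G] where
  Xs : G → Set X
  act : G → X → X
  Xs_one : Xs 1 = Set.univ
  act_one : ∀ x : X, act 1 x = x
  act_mem : ∀ g : G, ∀ x ∈ Xs g⁻¹, act g x ∈ Xs g
  act_inv : ∀ g : G, ∀ x ∈ Xs g⁻¹, act g⁻¹ (act g x) = x
  act_image : ∀ g h : G, act g '' (Xs g⁻¹ ∩ Xs h) = Xs g ∩ Xs (g * h)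
  act_comp : ∀ g h : G, ∀ x : X,
    x ∈ Xs h⁻¹ → x ∈ Xs (g * h)⁻¹ → act g (act h x) = act (g * h) x

namespace SetPartialAction

variable {G X : Type*} [Group G] (θ : SetPartialAction G X)

/-- A subset `Y ⊆ X` is `G`-invariant if `α_g (Y ∩ Xs g⁻¹) ⊆ Y` for all `g`. -/
def Invariant (Y : Set X) : Prop :=
  ∀ g : G, θ.act g '' (Y ∩ θ.Xs g⁻¹) ⊆ Y

/-- The partial action is minimal: the only `G`-invariant subsets are `∅`, `X`. -/
def Minimal : Prop :=
  ∀ Y : Set X, θ.Invariant Y → Y = ∅ ∨ Y = Set.univ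

/-- The partial action is faithful: for each non-identity `g` there is some
`x ∈ Xs g⁻¹` with `α_g x ≠ x`. -/
def Faithful : Prop :=
  ∀ g : G, g ≠ 1 → ∃ x ∈ θ.Xs g⁻¹, θ.act g x ≠ x

/-- The partial action is free: no non-identity `g` has a fixed point in
`Xs g⁻¹`. -/
def Free : Prop :=
  ∀ g : G, g ≠ 1 → ∀ x ∈ θ.Xs g⁻¹, θ.act g x ≠ x

end SetPartialAction


/-- a faithful minimal partial action of an abelian group on a
set is free. -/
theorem stmt13 {G X : Type*} [CommGroup G] (θ : SetPartialAction G X)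
    (hfaithful : θ.Faithful) (hminimal : θ.Minimal) :
    θ.Free := by
  intro g hg x hx hfix
  set Y : Set X := {y | y ∈ θ.Xs g⁻¹ ∧ θ.act g y = y} with hYdef
  have hinv : θ.Invariant Y := by
    rintro h z ⟨y, ⟨⟨hyg, hyfix⟩, hyh⟩, rfl⟩
    have hyg' : y ∈ θ.Xs g := hyfix ▸ θ.act_mem g y hyg
    have hyfix' : θ.act g⁻¹ y = y := by
      conv_lhs => rw [← hyfix]
      exact θ.act_inv g y hyg
    have h1 : y ∈ θ.Xs g⁻¹ ∩ θ.Xs (g⁻¹ * h⁻¹) := by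
      rw [← θ.act_image g⁻¹ h⁻¹]
      exact ⟨y, ⟨by simpa using hyg', hyh⟩, hyfix'⟩
    have hzg : θ.act h y ∈ θ.Xs g⁻¹ := by
      have himg := θ.act_image h (g⁻¹ * h⁻¹)
      have he : h * (g⁻¹ * h⁻¹) = g⁻¹ := by
        rw [mul_comm g⁻¹ h⁻¹, mul_inv_cancel_left]
      rw [he] at himg
      have : θ.act h y ∈ θ.Xs h ∩ θ.Xs g⁻¹ := by
        rw [← himg]; exact ⟨y, ⟨hyh, h1.2⟩, rfl⟩
      exact this.2
    refine ⟨hzg, ?_⟩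
    have hgh : y ∈ θ.Xs (g * h)⁻¹ := by
      have : (g * h)⁻¹ = g⁻¹ * h⁻¹ := by rw [mul_inv_rev, mul_comm]
      rw [this]; exact h1.2
    have hhg : y ∈ θ.Xs (h * g)⁻¹ := by
      have : (h * g)⁻¹ = g⁻¹ * h⁻¹ := by rw [mul_inv_rev]
      rw [this]; exact h1.2
    calc θ.act g (θ.act h y) = θ.act (g * h) y := θ.act_comp g h y hyh hgh
      _ = θ.act (h * g) y := by rw [mul_comm]
      _ = θ.act h (θ.act g y) := (θ.act_comp h g y hyg hhg).symm
      _ = θ.act h y := by rw [hyfix]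
  rcases hminimal Y hinv with hE | hU
  · have : x ∈ Y := ⟨hx, hfix⟩
    rw [hE] at this
    exact this
  · obtain ⟨w, hw, hwne⟩ := hfaithful g hg
    have : w ∈ Y := hU ▸ Set.mem_univ w
    exact hwne this.2
end

section
/- Let θ be a partial action of a group G on a non-empty set X, let B be a simple associative ring with local units, and let α be the induced partial action on F₀(X,B) (finitely supported functions X → B), given by D_g = {f : f vanishes off X_g} and α_g(f) = f ∘ θ_{g⁻¹}. Then θ is minimal if and only if F₀(X,B) is G-simple. -/
open scoped Classical

/-- `P` is the partial action on `F₀(X, B) = X →₀ B` (finitely supported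
functions, with pointwise operations) induced by the partial action `θ` on `X`:
`D g` consists of the functions vanishing off `Xs g`, and
`(α_g f) x = f (θ_{g⁻¹} x)` for `x ∈ Xs g`, `0` otherwise. -/
def IsInducedFinsuppAction {G X B : Type*} [Group G] [NonUnitalRing B]
    (θ : SetPartialAction G X) (P : RingPartialAction G (X →₀ B)) : Prop :=
  (∀ g : G, ∀ f : X →₀ B, f ∈ P.D g ↔ ∀ x ∉ θ.Xs g, f x = 0) ∧
  (∀ g : G, ∀ f : X →₀ B, (∀ x ∉ θ.Xs g⁻¹, f x = 0) →
    ∀ x : X, (P.act g f) x = if x ∈ θ.Xs g then f (θ.act g⁻¹ x) else 0)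


section Aux

variable {G X B : Type*} [Group G] [NonUnitalRing B]

lemma single_mul_single (x : X) (a b : B) :
    (Finsupp.single x a) * (Finsupp.single x b) = Finsupp.single x (a * b) := by
  ext y
  rw [Finsupp.mul_apply, Finsupp.single_apply, Finsupp.single_apply, Finsupp.single_apply]
  by_cases h : x = y <;> simp [h]

lemma single_val_mem {I : TwoSidedIdeal (X →₀ B)}
    (hBlocal : HasLocalUnitsOn (Set.univ : Set B))
    {f : X →₀ B} (hf : f ∈ I) (x : X) : Finsupp.single x (f x) ∈ I := by
  obtain ⟨e, -, -, he⟩ := hBlocal {f x} (by simp)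
  obtain ⟨-, hre⟩ := he (f x) (Finset.mem_singleton_self _)
  have : Finsupp.single x (f x) = f * Finsupp.single x e := by
    ext y
    rw [Finsupp.mul_apply, Finsupp.single_apply, Finsupp.single_apply]
    by_cases h : x = y
    · subst h; simpa using hre.symm
    · simp [h]
  rw [this]
  exact I.mul_mem_right _ _ hf

end Aux

/-- for a partial action `θ` of `G` on a non-empty set `X`, a
simple ring `B` with local units, and the induced partial action `α` on
`F₀(X, B)`, the action `θ` is minimal if and only if `F₀(X, B)` is `G`-simple. -/
theorem stmt14 {G X B : Type*} [Group G] [NonUnitalRing B] [Nonempty X]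
    (hBsimple : IsSimpleRing B) (hBlocal : HasLocalUnitsOn (Set.univ : Set B))
    (θ : SetPartialAction G X) (P : RingPartialAction G (X →₀ B))
    (hind : IsInducedFinsuppAction θ P) :
    θ.Minimal ↔ P.GSimple := by
  obtain ⟨hD, hact⟩ := hind
  haveI := hBsimple
  constructor
  · -- minimal → G-simple
    intro hmin I hinv
    by_cases hI : I = ⊥
    · exact Or.inl hI
    right
    have hex : ∃ f, f ∈ I ∧ f ≠ 0 := by
      by_contra h
      push_neg at h
      exact hI (SetLike.ext fun f => by
        rw [TwoSidedIdeal.mem_bot]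
        exact ⟨fun hf => h f hf, fun hf => hf ▸ I.zero_mem⟩)
    set Y : Set X := {x | ∃ f, f ∈ I ∧ f x ≠ 0} with hYdef
    have hYinv : θ.Invariant Y := by
      rintro g y ⟨x, ⟨⟨f, hfI, hfx⟩, hxXs⟩, rfl⟩
      set f' : X →₀ B := Finsupp.single x (f x) with hf'def
      have hf'I : f' ∈ I := single_val_mem hBlocal hfI x
      have hf'D : f' ∈ P.D g⁻¹ := by
        rw [hD]
        intro z hz
        rw [hf'def, Finsupp.single_apply]
        by_cases h : x = z
        · exact absurd (h ▸ hxXs) hz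
        · simp [h]
      refine ⟨P.act g f', hinv g f' hf'I hf'D, ?_⟩
      have hv : ∀ z ∉ θ.Xs g⁻¹, f' z = 0 := (hD g⁻¹ f').mp hf'D
      rw [hact g f' hv (θ.act g x),
        if_pos (θ.act_mem g x hxXs), θ.act_inv g x hxXs, hf'def,
        Finsupp.single_eq_same]
      exact hfx
    have hYuniv : Y = Set.univ := by
      rcases hmin Y hYinv with h | h
      · obtain ⟨f, hfI, hf0⟩ := hex
        obtain ⟨x, hx⟩ := Finsupp.ne_iff.mp hf0
        exact absurd (Set.mem_setOf.mpr ⟨f, hfI, by simpa using hx⟩) (h ▸ Set.notMem_empty x)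
      · exact h
    have hsingle : ∀ (x : X) (b : B), Finsupp.single x b ∈ I := by
      intro x b
      have hxY : x ∈ Y := hYuniv ▸ Set.mem_univ x
      obtain ⟨f, hfI, hfx⟩ := hxY
      set S : TwoSidedIdeal B := TwoSidedIdeal.mk' {b | Finsupp.single x b ∈ I}
        (by simp only [Set.mem_setOf_eq, Finsupp.single_zero]; exact I.zero_mem)
        (fun {a b} ha hb => by
          simp only [Set.mem_setOf_eq, Finsupp.single_add] at *
          exact I.add_mem ha hb)
        (fun {a} ha => by
          simp only [Set.mem_setOf_eq, Finsupp.single_neg] at *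
          exact I.neg_mem ha)
        (fun {r b} hb => by
          simp only [Set.mem_setOf_eq] at *
          rw [← single_mul_single]
          exact I.mul_mem_left _ _ hb)
        (fun {b r} hb => by
          simp only [Set.mem_setOf_eq] at *
          rw [← single_mul_single]
          exact I.mul_mem_right _ _ hb) with hSdef
      have hmem : ∀ c : B, c ∈ S ↔ Finsupp.single x c ∈ I := fun c =>
        TwoSidedIdeal.mem_mk' _ _ _ _ _ _ c
      have hfxS : f x ∈ S := (hmem (f x)).mpr (single_val_mem hBlocal hfI x)
      have hS : S = ⊤ := by
        rcases hBsimple.simple.eq_bot_or_eq_top S with h | h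
        · rw [h, TwoSidedIdeal.mem_bot] at hfxS
          exact absurd hfxS hfx
        · exact h
      exact (hmem b).mp (hS ▸ TwoSidedIdeal.mem_top _)
    refine SetLike.ext fun f => ⟨fun _ => TwoSidedIdeal.mem_top _, fun ht => ?_⟩
    clear ht
    induction f using Finsupp.induction with
    | zero => exact I.zero_mem
    | single_add a b f _ _ hf => exact I.add_mem (hsingle a b) hf
  · -- G-simple → minimal
    intro hsimple Y hYinv
    by_cases hY : Y = ∅
    · exact Or.inl hY
    right
    obtain ⟨y0, hy0⟩ := Set.nonempty_iff_ne_empty.mpr hY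
    set I : TwoSidedIdeal (X →₀ B) := TwoSidedIdeal.mk' {f | ∀ x ∉ Y, f x = 0}
      (fun x _ => rfl)
      (fun {a b} ha hb x hx => by rw [Finsupp.add_apply, ha x hx, hb x hx, add_zero])
      (fun {a} ha x hx => by rw [Finsupp.neg_apply, ha x hx, neg_zero])
      (fun {r b} hb x hx => by rw [Finsupp.mul_apply, hb x hx, mul_zero])
      (fun {b r} hb x hx => by rw [Finsupp.mul_apply, hb x hx, zero_mul]) with hIdef
    have hmem : ∀ f : X →₀ B, f ∈ I ↔ ∀ x ∉ Y, f x = 0 := fun f =>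
      TwoSidedIdeal.mem_mk' _ _ _ _ _ _ f
    have hGinv : P.GInvariant I := by
      intro g f hfI hfD
      rw [hmem] at hfI ⊢
      intro x hxY
      have hv : ∀ z ∉ θ.Xs g⁻¹, f z = 0 := (hD g⁻¹ f).mp hfD
      rw [hact g f hv x]
      by_cases hx : x ∈ θ.Xs g
      · rw [if_pos hx]
        have hxg : x ∈ θ.Xs (g⁻¹)⁻¹ := by rwa [inv_inv]
        have hz : θ.act g⁻¹ x ∈ θ.Xs g⁻¹ := θ.act_mem g⁻¹ x hxg
        apply hfI
        intro hzY
        apply hxY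
        have := θ.act_inv g⁻¹ x hxg
        rw [inv_inv] at this
        exact this ▸ hYinv g ⟨θ.act g⁻¹ x, ⟨hzY, hz⟩, rfl⟩
      · rw [if_neg hx]
    rcases hsimple I hGinv with h | h
    · exfalso
      obtain ⟨b, hb⟩ := exists_ne (0 : B)
      have : Finsupp.single y0 b ∈ I := by
        rw [hmem]
        intro x hx
        rw [Finsupp.single_apply]
        by_cases hxy : y0 = x
        · exact absurd (hxy ▸ hy0) hx
        · simp [hxy]
      rw [h, TwoSidedIdeal.mem_bot] at this
      exact hb (by simpa using Finsupp.single_eq_zero.mp this)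
    · rw [Set.eq_univ_iff_forall]
      intro x
      by_contra hx
      obtain ⟨b, hb⟩ := exists_ne (0 : B)
      have : Finsupp.single x b ∈ I := h ▸ TwoSidedIdeal.mem_top _
      rw [hmem] at this
      have := this x hx
      rw [Finsupp.single_eq_same] at this
      exact hb this
end

section
/- Let θ be a partial action of a group G on a non-empty set X, B a simple ring with local units, and α the induced partial action on F₀(X,B). If θ is free (for all non-identity g and all x ∈ X_{g⁻¹}, θ_g(x) ≠ x), then α is strongly outer: for every non-identity g ∈ G, α_g is outer at every non-zero idempotent of F₀(X,B). -/
open scoped Classical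

/-- for a partial action `θ` of `G` on a non-empty set `X`, a
simple ring `B` with local units, and the induced partial action `α` on
`F₀(X, B)`: if `θ` is free then `α` is strongly outer, i.e. for every
non-identity `g ∈ G` the map `α_g` is outer at every non-zero idempotent of
`F₀(X, B)`. -/
theorem stmt16 {G X B : Type*} [Group G] [NonUnitalRing B] [Nonempty X]
    (hBsimple : IsSimpleRing B) (hBlocal : HasLocalUnitsOn (Set.univ : Set B))
    (θ : SetPartialAction G X) (P : RingPartialAction G (X →₀ B))
    (hind : IsInducedFinsuppAction θ P)
    (hfree : θ.Free) :
    ∀ g : G, g ≠ 1 → ∀ u : X →₀ B, u ≠ 0 → u * u = u → ¬ P.InnerAt g u := by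

  intro g hg u hu0 huu hinner
  obtain ⟨huD, a, b, ⟨c₁, ha⟩, ⟨c₂, hb⟩, hab, hba, hconj⟩ := hinner
  -- pick x with u x ≠ 0
  obtain ⟨x, hx⟩ : ∃ x, u x ≠ 0 := by
    by_contra h
    push_neg at h
    exact hu0 (Finsupp.ext h)
  -- u vanishes off Xs g⁻¹
  have huvan : ∀ y ∉ θ.Xs g⁻¹, u y = 0 := (hind.1 g⁻¹ u).mp huD
  -- formula for act g u
  have hactu : ∀ y : X, (P.act g u) y = if y ∈ θ.Xs g then u (θ.act g⁻¹ y) else 0 :=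
    hind.2 g u huvan
  -- a x ≠ 0, hence (act g u) x ≠ 0
  have habx : a x * b x = u x := by
    have := congrArg (fun f : X →₀ B => f x) hab
    simpa [Finsupp.mul_apply] using this
  have hax : a x ≠ 0 := by
    intro h
    rw [h, zero_mul] at habx
    exact hx habx.symm
  have hactux : (P.act g u) x ≠ 0 := by
    intro h
    apply hax
    have := congrArg (fun f : X →₀ B => f x) ha
    simp only [Finsupp.mul_apply] at this
    rw [this, h, mul_zero]
  have hxXs : x ∈ θ.Xs g := by
    by_contra h
    exact hactux (by rw [hactu x, if_neg h])
  -- freeness: θ.act g⁻¹ x ≠ x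
  have hne : θ.act g⁻¹ x ≠ x := by
    have := hfree g⁻¹ (by simpa using hg) x (by simpa using hxXs)
    exact this
  -- local unit e for u x
  obtain ⟨e, -, -, he⟩ := hBlocal {u x} (by simp)
  obtain ⟨heu, hue⟩ := he (u x) (Finset.mem_singleton_self _)
  set f : X →₀ B := Finsupp.single x e with hf
  -- intertwining at x
  have hkey := hconj f
  have hufu_van : ∀ y ∉ θ.Xs g⁻¹, (u * f * u) y = 0 := by
    intro y hy
    simp [Finsupp.mul_apply, huvan y hy]
  have hlhs : (P.act g (u * f * u)) x = 0 := by
    rw [hind.2 g (u * f * u) hufu_van x, if_pos hxXs]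
    simp [Finsupp.mul_apply, hf, Finsupp.single_apply, Ne.symm hne]
  have huxux : u x * u x = u x := by
    have := congrArg (fun f : X →₀ B => f x) huu
    simpa [Finsupp.mul_apply] using this
  have hbx : b x * u x = b x := by
    have := congrArg (fun f : X →₀ B => f x) hb
    simp only [Finsupp.mul_apply] at this
    rw [this, mul_assoc, huxux]
  have hbax : b x * a x = (P.act g u) x := by
    have := congrArg (fun f : X →₀ B => f x) hba
    simpa [Finsupp.mul_apply] using this
  have hrhs : (b * (u * f * u) * a) x = (P.act g u) x := by
    simp only [Finsupp.mul_apply, hf, Finsupp.single_eq_same]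
    rw [hue, huxux, hbx, hbax]
  have := congrArg (fun h : X →₀ B => h x) hkey
  simp only [hlhs, hrhs] at this
  exact hactux this.symm
end

section
/- Let θ be a partial action of a group G on a compact Hausdorff space X with each X_g clopen, and let α be the induced partial action on C(X,B) for a unital simple topological real algebra B satisfying property (P1). Then θ is topologically minimal if and only if C(X,B) is G-simple. -/
open scoped Classical

/-- let `θ` be a partial action of `G` on a compact Hausdorff
space `X` with each `Xs g` clopen, and let `α` (encoded by `P`) be the induced
partial action on `C(X, B)`, where `B` is a unital simple topological real
algebra satisfying property (P1).  Then `θ` is topologically minimal if and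
only if `C(X, B)` is `G`-simple. -/
theorem stmt18 {G X B : Type*} [Group G]
    [TopologicalSpace X] [CompactSpace X] [T2Space X]
    [Ring B] [TopologicalSpace B] [IsTopologicalRing B]
    [Algebra ℝ B] [ContinuousSMul ℝ B]
    (hBsimple : IsSimpleRing B)
    -- property (P1)
    (q : B → ℝ) (hq_cont : Continuous q) (hq_nonneg : ∀ b : B, 0 ≤ q b)
    (hq_pos : ∀ b : B, b ≠ 0 → 0 < q b)
    (hq_ideal : ∀ I : TwoSidedIdeal C(X, B), ∀ f ∈ I,
      (⟨fun x => q (f x) • (1 : B),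
        ((hq_cont.comp f.continuous).smul continuous_const)⟩ : C(X, B)) ∈ I)
    -- the topological partial dynamical system
    (θ : SetPartialAction G X) (hclopen : ∀ g : G, IsClopen (θ.Xs g))
    (hcont : ∀ g : G, ContinuousOn (θ.act g) (θ.Xs g⁻¹))
    -- the induced partial action on `C(X, B)`
    (P : RingPartialAction G C(X, B))
    (hD : ∀ g : G, ∀ f : C(X, B), f ∈ P.D g ↔ ∀ x ∉ θ.Xs g, f x = 0)
    (hact : ∀ g : G, ∀ f : C(X, B), (∀ x ∉ θ.Xs g⁻¹, f x = 0) →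
      ∀ x : X, (P.act g f) x = if x ∈ θ.Xs g then f (θ.act g⁻¹ x) else 0) :
    -- topological minimality ↔ `G`-simplicity
    (∀ Y : Set X, IsClosed Y → θ.Invariant Y → Y = ∅ ∨ Y = Set.univ) ↔
      P.GSimple := by

  haveI := hBsimple
  haveI : Nontrivial B := inferInstance
  rcases isEmpty_or_nonempty X with hE | hNE
  · -- degenerate case: `X` is empty
    haveI : Subsingleton C(X, B) := ⟨fun f g => ContinuousMap.ext fun x => isEmptyElim x⟩
    constructor
    · intro _ I _
      left
      apply TwoSidedIdeal.ext
      intro f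
      rw [TwoSidedIdeal.mem_bot]
      exact ⟨fun _ => Subsingleton.elim _ _, fun h => h ▸ I.zero_mem⟩
    · intro _ Y _ _
      left
      exact Set.eq_empty_of_isEmpty Y
  obtain ⟨x₀⟩ := hNE
  have hq0 : q 0 = 0 := by
    by_contra hq0
    have h0 := hq_ideal ⊥ 0 (TwoSidedIdeal.zero_mem _)
    rw [TwoSidedIdeal.mem_bot] at h0
    have := congrArg (fun f : C(X,B) => f x₀) h0
    simp only [ContinuousMap.coe_mk, ContinuousMap.zero_apply] at this
    have h1 : (1 : B) = 0 := by
      calc (1 : B) = (q 0)⁻¹ • (q (0:B) • (1:B)) := by rw [inv_smul_smul₀ hq0]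
      _ = (q 0)⁻¹ • (0 : B) := by rw [this]
      _ = 0 := smul_zero _
    exact one_ne_zero h1
  constructor
  · -- minimality ⇒ G-simplicity
    intro hmin I hI
    set Y : Set X := {x | ∀ f ∈ I, f x = (0 : B)} with hYdef
    have hYclosed : IsClosed Y := by
      have : Y = ⋂ f ∈ (I : Set C(X,B)), {x | q (f x) ≤ 0} := by
        ext x
        simp only [hYdef, Set.mem_setOf_eq, Set.mem_iInter]
        constructor
        · intro h f hf
          rw [h f hf, hq0]
        · intro h f hf
          by_contra hne
          exact absurd (h f hf) (not_le.2 (hq_pos _ hne))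
      rw [this]
      exact isClosed_biInter fun f _ =>
        isClosed_le (hq_cont.comp f.continuous) continuous_const
    have hYinv : θ.Invariant Y := by
      rintro g _ ⟨y, ⟨hyY, hyXs⟩, rfl⟩ f hf
      -- indicator of `Xs g`
      have hfr : ∀ a ∈ frontier {x | x ∈ θ.Xs g}, (1 : B) = 0 := by
        intro a ha
        rw [show {x | x ∈ θ.Xs g} = θ.Xs g from rfl, (hclopen g).frontier_eq] at ha
        exact absurd ha (Set.notMem_empty a)
      set e : C(X, B) := ⟨fun x => if x ∈ θ.Xs g then (1 : B) else 0,
        Continuous.if hfr continuous_const continuous_const⟩ with hedef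
      have hfe : f * e ∈ I := I.mul_mem_right f e hf
      have hfeD : f * e ∈ P.D g := by
        rw [hD]
        intro x hx
        simp [hedef, hx]
      have hfeD' : f * e ∈ P.D (g⁻¹)⁻¹ := by rwa [inv_inv]
      have hmem : P.act g⁻¹ (f * e) ∈ I := hI g⁻¹ (f * e) hfe hfeD'
      have hvan : ∀ x ∉ θ.Xs (g⁻¹)⁻¹, (f * e) x = 0 := by
        rw [inv_inv]; exact (hD g (f * e)).1 hfeD
      have hform := hact g⁻¹ (f * e) hvan y
      rw [inv_inv] at hform
      have h0 : (P.act g⁻¹ (f * e)) y = 0 := hyY _ hmem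
      rw [hform, if_pos hyXs] at h0
      have hmemXg : θ.act g y ∈ θ.Xs g := θ.act_mem g y hyXs
      simpa [hedef, hmemXg] using h0
    rcases hmin Y hYclosed hYinv with hempty | huniv
    · right
      -- Y = ∅ : get an invertible element of I
      have hex : ∀ x : X, ∃ f ∈ (I : Set C(X,B)), f x ≠ 0 := by
        intro x
        by_contra h
        push_neg at h
        have : x ∈ Y := fun f hf => h f hf
        rw [hempty] at this
        exact this
      choose F hFI hFx using hex
      set U : X → Set X := fun x => {y | 0 < q (F x y)} with hUdef
      have hUopen : ∀ x, IsOpen (U x) :=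
        fun x => isOpen_lt continuous_const (hq_cont.comp (F x).continuous)
      have hUcover : Set.univ ⊆ ⋃ x, U x := by
        intro y _
        exact Set.mem_iUnion.2 ⟨y, hq_pos _ (hFx y)⟩
      obtain ⟨t, ht⟩ := isCompact_univ.elim_finite_subcover U hUopen hUcover
      set φ : X → ℝ := fun y => ∑ x ∈ t, q (F x y) with hφdef
      have hφcont : Continuous φ := by
        apply continuous_finset_sum
        intro x _
        exact hq_cont.comp (F x).continuous
      have hφpos : ∀ y, 0 < φ y := by
        intro y
        obtain ⟨x, hxt, hxy⟩ := Set.mem_iUnion₂.1 (ht (Set.mem_univ y))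
        exact Finset.sum_pos' (fun i _ => hq_nonneg _) ⟨x, hxt, hxy⟩
      set FF : C(X, B) := ∑ x ∈ t, (⟨fun y => q (F x y) • (1 : B),
        ((hq_cont.comp (F x).continuous).smul continuous_const)⟩ : C(X, B)) with hFFdef
      have hFFI : FF ∈ I := by
        apply sum_mem
        intro x _
        exact hq_ideal I (F x) (hFI x)
      have hFFval : ∀ y, FF y = φ y • (1 : B) := by
        intro y
        have : FF y = ∑ x ∈ t, (q (F x y) • (1 : B)) := by
          rw [hFFdef]
          induction t using Finset.induction with
          | empty => simp
          | insert h ih => simp_all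
        rw [this, hφdef, ← Finset.sum_smul]
      set inv : C(X, B) := ⟨fun y => (φ y)⁻¹ • (1 : B),
        ((hφcont.inv₀ fun y => (hφpos y).ne').smul continuous_const)⟩ with hinvdef
      have hone : FF * inv = 1 := by
        ext y
        rw [ContinuousMap.mul_apply, hFFval y]
        show (φ y • (1 : B)) * ((φ y)⁻¹ • (1 : B)) = 1
        rw [smul_mul_assoc, one_mul, smul_smul, mul_inv_cancel₀ (hφpos y).ne', one_smul]
      exact I.eq_top (hone ▸ I.mul_mem_right FF inv hFFI)
    · left
      apply TwoSidedIdeal.ext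
      intro f
      rw [TwoSidedIdeal.mem_bot]
      constructor
      · intro hf
        ext x
        have : x ∈ Y := huniv ▸ Set.mem_univ x
        exact this f hf
      · rintro rfl; exact I.zero_mem
  · -- G-simplicity ⇒ minimality
    intro hsimple Y hYclosed hYinv
    set I : TwoSidedIdeal C(X, B) := TwoSidedIdeal.mk' {f : C(X,B) | ∀ x ∈ Y, f x = 0}
      (by intro x _; exact ContinuousMap.zero_apply x)
      (by intro f g hf hg x hx; simp [ContinuousMap.add_apply, hf x hx, hg x hx])
      (by intro f hf x hx; simp [ContinuousMap.neg_apply, hf x hx])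
      (by intro f g hg x hx; simp [ContinuousMap.mul_apply, hg x hx])
      (by intro f g hf x hx; simp [ContinuousMap.mul_apply, hf x hx]) with hIdef
    have hImem : ∀ f : C(X,B), f ∈ I ↔ ∀ x ∈ Y, f x = 0 := by
      intro f; rw [hIdef, TwoSidedIdeal.mem_mk']; rfl
    have hIinv : P.GInvariant I := by
      intro g f hf hfD
      rw [hImem] at hf ⊢
      intro x hx
      have hvan : ∀ z ∉ θ.Xs g⁻¹, f z = 0 := (hD g⁻¹ f).1 hfD
      rw [hact g f hvan x]
      by_cases hxg : x ∈ θ.Xs g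
      · rw [if_pos hxg]
        have : θ.act g⁻¹ x ∈ Y := by
          apply hYinv g⁻¹
          refine ⟨x, ⟨hx, ?_⟩, rfl⟩
          rwa [inv_inv]
        exact hf _ this
      · rw [if_neg hxg]
    rcases hsimple I hIinv with hbot | htop
    · right
      rw [Set.eq_univ_iff_forall]
      intro y
      by_contra hy
      obtain ⟨ψ, hψY, hψy, -⟩ := exists_continuous_zero_one_of_isClosed hYclosed
        (isClosed_singleton (x := y)) (Set.disjoint_singleton_right.2 hy)
      set f : C(X, B) := ⟨fun x => ψ x • (1 : B), ψ.continuous.smul continuous_const⟩ with hfdef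
      have hfI : f ∈ I := by
        rw [hImem]
        intro x hx
        have : ψ x = 0 := hψY hx
        simp [hfdef, this]
      rw [hbot, TwoSidedIdeal.mem_bot] at hfI
      have : f y = 0 := by rw [hfI]; rfl
      have hy1 : ψ y = 1 := hψy rfl
      rw [hfdef] at this
      simp only [ContinuousMap.coe_mk, hy1, one_smul] at this
      exact one_ne_zero this
    · left
      rw [Set.eq_empty_iff_forall_notMem]
      intro x hx
      have h1 : (1 : C(X,B)) ∈ I := htop ▸ trivial
      rw [hImem] at h1
      exact one_ne_zero (h1 x hx)
end
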